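/- arXiv:2507.00495 — 9 statements merged into one kernel-verified Lean document; each statement's English description precedes it below -/
import Mathlib

section
/- For positive integers m and n with m ≥ n ≥ 3, F_{m+n-2} < F_m · F_n < F_{m+n-1}, where F denotes the Fibonacci sequence. -/
theorem fib_prod_bounds (m n : ℕ) (hn : 3 ≤ n) (hmn : n ≤ m) :
    Nat.fib (m + n - 2) < Nat.fib m * Nat.fib n ∧
    Nat.fib m * Nat.fib n < Nat.fib (m + n - 1) := by
  obtain ⟨k, rfl⟩ := Nat.exists_eq_add_of_le hmn
  obtain ⟨j, rfl⟩ := Nat.exists_eq_add_of_le hn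
  have h1 : 3 + j + k + (3 + j) - 2 = (j + k + 2) + (j + 1) + 1 := by omega
  have h2 : 3 + j + k + (3 + j) - 1 = (j + k + 2) + (j + 2) + 1 := by omega
  have hm : 3 + j + k = j + k + 3 := by omega
  have hn3 : 3 + j = j + 3 := by omega
  rw [h1, h2, hm, hn3]
  have A := Nat.fib_add (j + k + 2) (j + 1)
  have B := Nat.fib_add (j + k + 2) (j + 2)
  have e1 : Nat.fib (j + 3) = Nat.fib (j + 2) + Nat.fib (j + 1) := by
    rw [show j + 3 = (j+1) + 2 by ring, Nat.fib_add_two]; ring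
  have e2 : j + k + 2 + 1 = j + k + 3 := by ring
  have e3 : j + 1 + 1 = j + 2 := by ring
  have e4 : j + 2 + 1 = j + 3 := by ring
  rw [e2, e3] at A
  rw [e2, e4] at B
  have hlt : Nat.fib (j + k + 2) < Nat.fib (j + k + 3) :=
    Nat.fib_lt_fib_succ (by omega)
  have p1 : 0 < Nat.fib (j + 1) := Nat.fib_pos.mpr (by omega)
  have p2 : 0 < Nat.fib (j + 2) := Nat.fib_pos.mpr (by omega)
  have pk : 0 < Nat.fib (j + k + 2) := Nat.fib_pos.mpr (by omega)
  constructor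
  · rw [A, e1]; nlinarith
  · rw [B]; nlinarith
end

section
/- Let {V_n} satisfy V_{n+2} = V_{n+1} + V_n. Then for all positive integers m, n, d: F_n V_{m+n+d} − F_{n+d} V_{m+n} = (−1)^{n−1} F_d V_m. -/
lemma Vexp (V : ℕ → ℤ) (hV : ∀ m, V (m + 2) = V (m + 1) + V m) :
    ∀ k m, V (m + k + 1) = (Nat.fib k : ℤ) * V m + (Nat.fib (k + 1) : ℤ) * V (m + 1) := by
  intro k
  induction k using Nat.twoStepInduction with
  | zero => intro m; simp
  | one => intro m; simp [show m + 1 + 1 = m + 2 from rfl, hV m]; ring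
  | more k ih1 ih2 =>
    intro m
    have h := hV (m + k + 1)
    have e1 : m + k + 1 + 2 = m + (k + 2) + 1 := by ring
    have e2 : m + k + 1 + 1 = m + (k + 1) + 1 := by ring
    rw [e1, e2] at h
    rw [h, ih1 m, ih2 m]
    push_cast [Nat.fib_add_two]
    ring

lemma fibId : ∀ n d : ℕ, (Nat.fib (n + 1) : ℤ) * Nat.fib (n + d) - (Nat.fib n : ℤ) * Nat.fib (n + d + 1) = (-1) ^ n * Nat.fib d := by
  intro n
  induction n with
  | zero => intro d; simp
  | succ n ih =>
    intro d
    have h := ih d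
    have e1 : n + 1 + d = n + d + 1 := by ring
    rw [e1]
    push_cast [Nat.fib_add_two, show n + d + 1 + 1 = n + d + 2 from rfl,
      show n + d + 2 = (n + d) + 2 from rfl]
    push_cast [Nat.fib_add_two] at *
    ring_nf
    ring_nf at h
    linarith [h]

theorem genFib_identity (V : ℕ → ℤ) (hV : ∀ m, V (m + 2) = V (m + 1) + V m)
    (m n d : ℕ) (hm : 1 ≤ m) (hn : 1 ≤ n) (hd : 1 ≤ d) :
    (Nat.fib n : ℤ) * V (m + n + d) - (Nat.fib (n + d) : ℤ) * V (m + n)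
      = (-1) ^ (n - 1) * (Nat.fib d : ℤ) * V m := by
  obtain ⟨n', rfl⟩ : ∃ n', n = n' + 1 := ⟨n - 1, (Nat.succ_pred_eq_of_pos hn).symm⟩
  have e1 : m + (n' + 1) + d = m + (n' + d) + 1 := by ring
  have e2 : m + (n' + 1) = m + n' + 1 := by ring
  rw [e1, e2, Vexp V hV (n' + d) m, Vexp V hV n' m]
  have h := fibId n' d
  have e3 : n' + 1 + d = n' + d + 1 := by ring
  rw [e3]
  simp only [Nat.add_sub_cancel]
  push_cast at h ⊢
  linear_combination (V m) * h + (V (m+1)) * ((Nat.fib (n'+1) : ℤ) * Nat.fib (n'+d+1) - (Nat.fib (n'+d+1) : ℤ) * Nat.fib (n'+1))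
end

section
/- For every positive even integer d and every integer k ≥ 3, ⌊F_{kd} / F_{(k−1)d}⌋ = L_d − 1. -/
def lucas : ℕ → ℕ
  | 0 => 2
  | 1 => 1
  | n + 2 => lucas (n + 1) + lucas n

lemma cassini (n : ℕ) : (Nat.fib (n+1) : ℤ)^2 - Nat.fib n * Nat.fib (n+2) = (-1)^n := by
  induction n with
  | zero => simp
  | succ n ih =>
    have h3 : (Nat.fib (n+3) : ℤ) = Nat.fib (n+2) + Nat.fib (n+1) := by
      rw [show n+3 = (n+1)+2 by ring, Nat.fib_add_two]; push_cast; ring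
    have h2 : (Nat.fib (n+2) : ℤ) = Nat.fib (n+1) + Nat.fib n := by
      rw [Nat.fib_add_two]; push_cast; ring
    rw [pow_succ]
    linear_combination -ih - (Nat.fib (n+1) : ℤ) * h3 + (Nat.fib (n+2) : ℤ) * h2

lemma lucas_eq (n : ℕ) : lucas (n+1) = Nat.fib n + Nat.fib (n+2) := by
  induction n using Nat.twoStepInduction with
  | zero => rfl
  | one => rfl
  | more n ih1 ih2 =>
    show lucas (n+2) + lucas (n+1) = _
    rw [ih1, ih2, Nat.fib_add_two (n := n+2), Nat.fib_add_two (n := n)]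
    ring

lemma key (e : ℕ) (hde : Even (e+1)) (j : ℕ) :
    Nat.fib (2*(e+1) + j) + Nat.fib j = lucas (e+1) * Nat.fib ((e+1) + j) := by
  induction j using Nat.twoStepInduction with
  | zero =>
    simp only [Nat.fib_zero, add_zero]
    rw [show 2*(e+1) = (e+1) + e + 1 by ring, Nat.fib_add, lucas_eq]
    ring
  | one =>
    have he : Odd e := by
      rcases hde with ⟨m, hm⟩
      exact ⟨m - 1, by omega⟩
    have h := cassini e
    rw [he.neg_one_pow] at h
    have h1 : Nat.fib (2*(e+1)+1) = Nat.fib (e+2)^2 + Nat.fib (e+1)^2 :=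
      Nat.fib_two_mul_add_one (e+1)
    have h2 := lucas_eq e
    zify at h1 h2 ⊢
    rw [h2, h1, show (e+1)+1 = e+2 by ring]
    linear_combination h
  | more j ih1 ih2 =>
    have e1 : Nat.fib (2*(e+1)+(j+2))
        = Nat.fib (2*(e+1)+(j+1)) + Nat.fib (2*(e+1)+j) := by
      rw [show 2*(e+1)+(j+2) = (2*(e+1)+j)+2 by ring, Nat.fib_add_two,
        show (2*(e+1)+j)+1 = 2*(e+1)+(j+1) by ring]
      ring
    have e2 : Nat.fib (j+2) = Nat.fib j + Nat.fib (j+1) := Nat.fib_add_two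
    have e3 : Nat.fib ((e+1)+(j+2))
        = Nat.fib ((e+1)+(j+1)) + Nat.fib ((e+1)+j) := by
      rw [show (e+1)+(j+2) = ((e+1)+j)+2 by ring, Nat.fib_add_two,
        show ((e+1)+j)+1 = (e+1)+(j+1) by ring]
      ring
    zify at e1 e2 e3 ih1 ih2 ⊢
    linear_combination e1 + e2 - (lucas (e+1) : ℤ) * e3 + ih1 + ih2

theorem fib_ratio_floor (d k : ℕ) (hd : 0 < d) (hde : Even d) (hk : 3 ≤ k) :
    Nat.fib (k * d) / Nat.fib ((k - 1) * d) = lucas d - 1 := by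
  obtain ⟨e, rfl⟩ : ∃ e, d = e + 1 := ⟨d - 1, by omega⟩
  obtain ⟨a, rfl⟩ : ∃ a, k = a + 3 := ⟨k - 3, by omega⟩
  rw [show a + 3 - 1 = a + 2 by omega]
  have hkey := key e hde ((a+1)*(e+1))
  rw [show 2*(e+1) + (a+1)*(e+1) = (a+3)*(e+1) by ring,
      show (e+1) + (a+1)*(e+1) = (a+2)*(e+1) by ring] at hkey
  have hpos : 0 < Nat.fib ((a+1)*(e+1)) :=
    Nat.fib_pos.mpr (Nat.mul_pos (by omega) (by omega))
  have hmono : Nat.fib ((a+1)*(e+1)) ≤ Nat.fib ((a+2)*(e+1)) :=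
    Nat.fib_mono (Nat.mul_le_mul_right _ (by omega))
  have hl : 1 ≤ lucas (e+1) := by
    rw [lucas_eq]
    have := Nat.fib_pos.mpr (show 0 < e + 2 by omega)
    omega
  apply Nat.div_eq_of_lt_le
  · calc (lucas (e+1) - 1) * Nat.fib ((a+2)*(e+1))
        = lucas (e+1) * Nat.fib ((a+2)*(e+1)) - Nat.fib ((a+2)*(e+1)) := by
          rw [Nat.sub_mul, one_mul]
      _ ≤ Nat.fib ((a+3)*(e+1)) := by omega
  · rw [Nat.sub_add_cancel hl]; omega
end

section
/- Let {V_n} satisfy the Fibonacci recurrence and let d be a positive even integer. For integers k ≥ t ≥ 1 and any n, (L_d − 2) ∑_{i=t}^{k} V_{n+id} = (V_{n+(k+1)d} − V_{n+kd}) − (V_{n+td} − V_{n+(t−1)d}). -/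
lemma lucas_key (V : ℕ → ℤ) (hV : ∀ m, V (m + 2) = V (m + 1) + V m) :
    ∀ d m, (lucas d : ℤ) * V (m + d) = V (m + 2 * d) + (-1 : ℤ) ^ d * V m := by
  intro d
  induction d using Nat.twoStepInduction with
  | zero => intro m; simp [lucas]; ring
  | one => intro m; simp [lucas, hV m]
  | more d ih1 ih2 =>
    intro m
    have h1 := ih2 (m + 1)
    have h2 := ih1 (m + 2)
    have e1 : m + 1 + (d + 1) = m + 2 + d := by ring
    have e2 : m + 1 + 2 * (d + 1) = m + 2 * d + 3 := by ring
    have e3 : m + 2 + 2 * d = m + 2 * d + 2 := by ring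
    rw [e1, e2] at h1
    rw [e3] at h2
    have hv1 := hV m
    have hv2 := hV (m + 2 * d + 2)
    have e4 : m + 2 * d + 2 + 2 = m + 2 * (d + 2) := by ring
    have e5 : m + 2 * d + 2 + 1 = m + 2 * d + 3 := by ring
    rw [e4, e5] at hv2
    have e6 : m + (d + 2) = m + 2 + d := by ring
    rw [e6]
    have hl : ((lucas (d + 2) : ℤ)) = (lucas (d + 1) : ℤ) + (lucas d : ℤ) := by
      simp [lucas]
    rw [hl]
    have hs : ((-1 : ℤ)) ^ (d + 2) = (-1) ^ d := by ring
    have hs1 : ((-1 : ℤ)) ^ (d + 1) = -(-1) ^ d := by ring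
    rw [hs]
    rw [hs1] at h1
    linear_combination h1 + h2 - hv2 + (-1 : ℤ) ^ d * hv1

theorem genFib_sum_telescope (V : ℕ → ℤ) (hV : ∀ m, V (m + 2) = V (m + 1) + V m)
    (d n k t : ℕ) (hd : 0 < d) (hde : Even d) (ht : 1 ≤ t) (htk : t ≤ k) :
    ((lucas d : ℤ) - 2) * ∑ i ∈ Finset.Icc t k, V (n + i * d)
      = (V (n + (k + 1) * d) - V (n + k * d)) - (V (n + t * d) - V (n + (t - 1) * d)) := by
  have hsign : ((-1 : ℤ)) ^ d = 1 := hde.neg_one_pow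
  have key : ∀ i : ℕ, 1 ≤ i →
      ((lucas d : ℤ) - 2) * V (n + i * d)
        = (V (n + (i + 1) * d) - V (n + i * d)) - (V (n + i * d) - V (n + (i - 1) * d)) := by
    intro i hi
    obtain ⟨j, rfl⟩ := Nat.exists_eq_add_of_le hi
    have h := lucas_key V hV d (n + j * d)
    rw [hsign] at h
    have e1 : n + j * d + d = n + (1 + j) * d := by ring
    have e2 : n + j * d + 2 * d = n + (1 + j + 1) * d := by ring
    have e3 : 1 + j - 1 = j := by omega
    rw [e1, e2] at h
    rw [e3]
    linarith
  induction k, htk using Nat.le_induction with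
  | base =>
    rw [Finset.Icc_self, Finset.sum_singleton]
    exact key t ht
  | succ k hk ih =>
    rw [Finset.sum_Icc_succ_top (by omega : t ≤ k + 1), mul_add, ih,
      key (k + 1) (by omega)]
    simp only [Nat.add_sub_cancel]
    ring
end

section
/- For a positive even integer d and integers 1 < i < k, F_{(i−1)d} / F_{(k−1)d} < F_{id} / F_{kd}, equivalently F_{(i−1)d} F_{kd} < F_{id} F_{(k−1)d}. -/
lemma fib_catalanZ : ∀ m t : ℕ, (Nat.fib (m+t) : ℤ) * Nat.fib (m+1) - Nat.fib (m+t+1) * Nat.fib m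
    = (-1)^m * Nat.fib t := by
  intro m
  induction m with
  | zero => intro t; simp
  | succ n ih =>
    intro t
    have h := ih t
    have e1 : n + 1 + t = n + t + 1 := by ring
    have e2 : n + t + 1 + 1 = n + t + 2 := by ring
    rw [e1, e2, Nat.fib_add_two, Nat.fib_add_two]
    push_cast
    push_cast at h
    linear_combination (-1 : ℤ) * h

theorem fib_ratio_increasing (d i k : ℕ) (hd : 0 < d) (hde : Even d)
    (hi : 1 < i) (hik : i < k) :
    Nat.fib ((i - 1) * d) * Nat.fib (k * d) < Nat.fib (i * d) * Nat.fib ((k - 1) * d) := by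
  obtain ⟨p, hp⟩ : ∃ p, (i - 1) * d = p + 1 := by
    have : 0 < (i - 1) * d := Nat.mul_pos (by omega) hd
    exact ⟨(i-1)*d - 1, by omega⟩
  set t := (k - i) * d with ht
  have ht0 : 0 < t := Nat.mul_pos (by omega) hd
  have s1 : (i - 1) * d = i * d - 1 * d := by rw [Nat.sub_mul]
  have s2 : (k - 1) * d = k * d - 1 * d := by rw [Nat.sub_mul]
  have s3 : (k - i) * d = k * d - i * d := by rw [Nat.sub_mul]
  have m1 : i * d ≤ k * d := Nat.mul_le_mul_right d (by omega)
  have m2 : d ≤ i * d := Nat.le_mul_of_pos_left d (by omega)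
  have hid : i * d = p + d + 1 := by omega
  have hkd : k * d = p + t + d + 1 := by omega
  have hk1d : (k - 1) * d = p + t + 1 := by omega
  have hpodd : Odd p := by
    have : Even (p + 1) := hp ▸ hde.mul_left (i - 1)
    exact Nat.Even.sub_odd (by omega) this odd_one
  have E1 : (Nat.fib (i * d) : ℤ) = Nat.fib p * Nat.fib d + Nat.fib (p+1) * Nat.fib (d+1) := by
    rw [hid, Nat.fib_add]; push_cast; ring
  have E2 : (Nat.fib (k * d) : ℤ)
      = Nat.fib (p+t) * Nat.fib d + Nat.fib (p+t+1) * Nat.fib (d+1) := by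
    rw [hkd, show p + t + d + 1 = (p+t) + d + 1 from rfl, Nat.fib_add]; push_cast; ring
  have E3 := fib_catalanZ p t
  rw [hpodd.neg_one_pow] at E3
  have hfd : (0:ℤ) < Nat.fib d := by exact_mod_cast Nat.fib_pos.mpr hd
  have hft : (0:ℤ) < Nat.fib t := by exact_mod_cast Nat.fib_pos.mpr ht0
  have key : (Nat.fib (i * d) : ℤ) * Nat.fib ((k-1)*d)
      - Nat.fib ((i-1)*d) * Nat.fib (k * d) = Nat.fib d * Nat.fib t := by
    rw [hp, hk1d, E1, E2]
    linear_combination (-(Nat.fib d : ℤ)) * E3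
  have : (Nat.fib ((i-1)*d) : ℤ) * Nat.fib (k*d) < Nat.fib (i*d) * Nat.fib ((k-1)*d) := by
    nlinarith
  exact_mod_cast this
end

section
/- Let d be even with gcd(V_1,V_2) = 1 and gcd(V_n, F_d) = 1, and let S = ⟨V_n, V_{n+d}, V_{n+2d}, …⟩ be the numerical semigroup generated by the subsequence. Then the embedding dimension of S equals the smallest positive integer κ with F_{κd}/F_d ≥ V_n. -/
open Nat


lemma fib_cat (t : ℕ) : Nat.fib (2*t+1) * Nat.fib (2*t+1) = Nat.fib (2*t) * Nat.fib (2*t+2) + 1 ∧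
    Nat.fib (2*t+2) * Nat.fib (2*t+2) + 1 = Nat.fib (2*t+1) * Nat.fib (2*t+3) := by
  induction t with
  | zero => decide
  | succ t ih =>
    obtain ⟨h1, h2⟩ := ih
    have e3 : Nat.fib (2*t+3) = Nat.fib (2*t+1) + Nat.fib (2*t+2) := Nat.fib_add_two
    have e4 : Nat.fib (2*t+4) = Nat.fib (2*t+2) + Nat.fib (2*t+3) := Nat.fib_add_two
    have e5 : Nat.fib (2*t+5) = Nat.fib (2*t+3) + Nat.fib (2*t+4) := Nat.fib_add_two
    constructor
    · show Nat.fib (2*(t+1)+1) * Nat.fib (2*(t+1)+1) = Nat.fib (2*(t+1)) * Nat.fib (2*(t+1)+2) + 1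
      have a1 : 2*(t+1)+1 = 2*t+3 := by ring
      have a2 : 2*(t+1) = 2*t+2 := by ring
      have a3 : 2*(t+1)+2 = 2*t+4 := by ring
      rw [a1, a3, a2, e3, e4]
      nlinarith [h1, h2]
    · show Nat.fib (2*(t+1)+2) * Nat.fib (2*(t+1)+2) + 1 = Nat.fib (2*(t+1)+1) * Nat.fib (2*(t+1)+3)
      have a1 : 2*(t+1)+1 = 2*t+3 := by ring
      have a3 : 2*(t+1)+2 = 2*t+4 := by ring
      have a4 : 2*(t+1)+3 = 2*t+5 := by ring
      rw [a3, a4, a1, e3, e4, e5]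
      nlinarith [h1, h2]

lemma fib_even_cat {d : ℕ} (hd2 : 2 ≤ d) (hde : Even d) :
    Nat.fib d * Nat.fib d + 1 = Nat.fib (d-1) * Nat.fib (d+1) := by
  obtain ⟨s, hs⟩ := hde
  have hs1 : 1 ≤ s := by omega
  obtain ⟨t, ht⟩ : ∃ t, s = t + 1 := ⟨s - 1, by omega⟩
  have hd : d = 2*t+2 := by omega
  subst hd
  have := (fib_cat t).2
  have e1 : 2*t+2-1 = 2*t+1 := by omega
  have e2 : 2*t+2+1 = 2*t+3 := by omega
  rw [e1, e2]
  exact this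

lemma fib_F3 {d : ℕ} (hd2 : 2 ≤ d) (hde : Even d) (m : ℕ) :
    Nat.fib (m + 2*d) + Nat.fib m = (Nat.fib (d+1) + Nat.fib (d-1)) * Nat.fib (m + d) := by
  have base0 : Nat.fib (2*d) = (Nat.fib (d+1) + Nat.fib (d-1)) * Nat.fib d := by
    have h := Nat.fib_add (d-1) d
    have e : d - 1 + d + 1 = 2*d := by omega
    rw [e] at h
    have e2 : d - 1 + 1 = d := by omega
    rw [e2] at h
    rw [h]; ring
  have base1 : Nat.fib (2*d+1) + 1 = (Nat.fib (d+1) + Nat.fib (d-1)) * Nat.fib (d+1) := by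
    have h := Nat.fib_add d d
    have e : d + d + 1 = 2*d+1 := by omega
    rw [e] at h
    have hc := fib_even_cat hd2 hde
    rw [h]
    nlinarith [hc]
  -- two-step induction
  have H : ∀ m, (Nat.fib (m + 2*d) + Nat.fib m = (Nat.fib (d+1) + Nat.fib (d-1)) * Nat.fib (m + d))
      ∧ (Nat.fib (m+1 + 2*d) + Nat.fib (m+1) = (Nat.fib (d+1) + Nat.fib (d-1)) * Nat.fib (m+1 + d)) := by
    intro m
    induction m with
    | zero =>
      constructor
      · simpa using base0
      · have e : 1 + 2*d = 2*d+1 := by omega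
        have e2 : 1 + d = d + 1 := by omega
        rw [e, e2]
        simpa using base1
    | succ m ih =>
      obtain ⟨h0, h1⟩ := ih
      refine ⟨h1, ?_⟩
      have e1 : m+1+1+2*d = (m+2*d) + 2 := by omega
      have e2 : m+1+1 = m + 2 := by omega
      have e3 : m+1+1+d = (m+d) + 2 := by omega
      rw [e1, e2, e3, Nat.fib_add_two, Nat.fib_add_two, Nat.fib_add_two, Nat.mul_add]
      have e4 : m + 2*d + 1 = m + 1 + 2*d := by omega
      have e5 : m + d + 1 = m + 1 + d := by omega
      rw [e4, e5]
      omega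
  exact (H m).1


/-- The unique minimal generating set of a numerical semigroup `S`,
namely `S* \ (S* + S*)`. -/
def minGenSet (S : AddSubmonoid ℕ) : Set ℕ :=
  {m | m ∈ S ∧ m ≠ 0 ∧ ∀ a b : ℕ, a ∈ S → b ∈ S → a ≠ 0 → b ≠ 0 → m ≠ a + b}

set_option maxHeartbeats 1600000 in
theorem embedding_dimension_of_genFib_subsequence
    (V : ℕ → ℕ) (hV : ∀ m, V (m + 2) = V (m + 1) + V m)
    (hVpos : ∀ m, 1 ≤ m → 0 < V m)
    (d n κ : ℕ) (hd : 0 < d) (hde : Even d) (hn : 1 ≤ n)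
    (hgcd1 : Nat.gcd (V 1) (V 2) = 1)
    (hgcd2 : Nat.gcd (V n) (Nat.fib d) = 1)
    (hκ : IsLeast {j : ℕ | 0 < j ∧ V n ≤ Nat.fib (j * d) / Nat.fib d} κ)
    (S : AddSubmonoid ℕ)
    (hS : S = AddSubmonoid.closure {m | ∃ k : ℕ, m = V (n + k * d)}) :
    (minGenSet S).ncard = κ := by
  subst hS
  obtain ⟨⟨hκ0, hκge⟩, hκmin⟩ := hκ
  have hd2 : 2 ≤ d := by obtain ⟨r, hr⟩ := hde; omega
  have congrV : ∀ {x y : ℕ}, x = y → V x = V y := fun h => by rw [h]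
  set c : ℕ := Nat.fib (d+1) + Nat.fib (d-1) with hc
  set u : ℕ → ℕ := fun k => Nat.fib (k*d) / Nat.fib d with hu
  set g : ℕ → ℕ := fun k => V (n + k*d) with hgdef
  set Gens : Set ℕ := {m | ∃ k : ℕ, m = V (n + k * d)} with hG
  have hg0 : g 0 = V n := congrV (by omega)
  have hfd : 0 < Nat.fib d := Nat.fib_pos.mpr hd
  -- linearity of V
  have hVlin : ∀ m k : ℕ, V (m + k + 1) = Nat.fib k * V m + Nat.fib (k+1) * V (m+1) := by
    intro m k
    have H : ∀ k, (V (m + k + 1) = Nat.fib k * V m + Nat.fib (k+1) * V (m+1))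
        ∧ (V (m + k + 2) = Nat.fib (k+1) * V m + Nat.fib (k+2) * V (m+1)) := by
      intro k
      induction k with
      | zero => constructor <;> simp [hV m, Nat.fib_one, Nat.fib_two] <;> omega
      | succ k ih =>
        obtain ⟨ihl, ihr⟩ := ih
        constructor
        · have e : m + (k+1) + 1 = m + k + 2 := by omega
          rw [e, ihr]
        · have hrec := hV (m + k + 1)
          have e : m + k + 1 + 2 = m + (k+1) + 2 := by omega
          have e2 : m + k + 1 + 1 = m + k + 2 := by omega
          rw [e, e2] at hrec
          rw [hrec, ihl, ihr, Nat.fib_add_two (n := k+1), Nat.fib_add_two (n := k)]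
          ring
    exact (H k).1
  have hVmd : ∀ m, V (m + d) = Nat.fib (d-1) * V m + Nat.fib d * V (m+1) := by
    intro m
    have h := hVlin m (d-1)
    have e : m + (d-1) + 1 = m + d := by omega
    have e2 : d - 1 + 1 = d := by omega
    rw [e, e2] at h
    exact h
  have hVm2d : ∀ m, V (m + 2*d) = Nat.fib (2*d-1) * V m + Nat.fib (2*d) * V (m+1) := by
    intro m
    have h := hVlin m (2*d-1)
    have e : m + (2*d-1) + 1 = m + 2*d := by omega
    have e2 : 2*d - 1 + 1 = 2*d := by omega
    rw [e, e2] at h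
    exact h
  have A1 : Nat.fib (2*d) = c * Nat.fib d := by
    have h := fib_F3 hd2 hde 0
    simpa [hc] using h
  have A2 : Nat.fib (2*d-1) + 1 = c * Nat.fib (d-1) := by
    have h := Nat.fib_add (d-1) (d-1)
    have e : d - 1 + (d-1) + 1 = 2*d - 1 := by omega
    have e2 : d - 1 + 1 = d := by omega
    rw [e, e2] at h
    have hcat := fib_even_cat hd2 hde
    rw [h, hc]
    nlinarith [hcat]
  have hVrec2d : ∀ m, V (m + 2*d) + V m = c * V (m + d) := by
    intro m
    rw [hVm2d m, hVmd m]
    have zA1 : (Nat.fib (2*d) : ℤ) = (c : ℤ) * Nat.fib d := by exact_mod_cast A1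
    have zA2 : (Nat.fib (2*d-1) : ℤ) + 1 = (c : ℤ) * Nat.fib (d-1) := by exact_mod_cast A2
    zify
    linear_combination (V m : ℤ) * zA2 + (V (m+1) : ℤ) * zA1
  have hgrec : ∀ k, g (k+2) + g k = c * g (k+1) := by
    intro k
    have h := hVrec2d (n + k*d)
    rw [congrV (show n + k*d + 2*d = n + (k+2)*d by ring),
        congrV (show n + k*d + d = n + (k+1)*d by ring)] at h
    exact h
  -- monotonicity
  have hVs : ∀ m, 1 ≤ m → V m ≤ V (m+1) := by
    intro m hm
    obtain ⟨m', rfl⟩ : ∃ m', m = m' + 1 := ⟨m - 1, by omega⟩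
    have h := hV m'
    have e : m' + 1 + 1 = m' + 2 := by omega
    rw [e]
    omega
  have hVle : ∀ m, 1 ≤ m → ∀ j, V m ≤ V (m + j) := by
    intro m hm j
    induction j with
    | zero => simp
    | succ j ih =>
      have h := hVs (m + j) (by omega)
      have e : m + (j+1) = m + j + 1 := by omega
      rw [e]
      omega
  have hgpos : ∀ k, 0 < g k := fun k => hVpos (n + k*d) (by omega)
  have hgstep : ∀ k, g k < g (k+1) := by
    intro k
    have h1 : V (n + k*d + 2) ≤ V (n + (k+1)*d) := by
      have h := hVle (n + k*d + 2) (by omega) (d - 2)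
      have e : n + k*d + 2 + (d-2) = n + (k+1)*d := by
        have : (k+1)*d = k*d + d := by ring
        omega
      rw [e] at h
      exact h
    have h2 := hV (n + k*d)
    have h3 := hVpos (n + k*d + 1) (by omega)
    show V (n + k*d) < V (n + (k+1)*d)
    omega
  have hgmono : StrictMono g := strictMono_nat_of_lt_succ hgstep
  have hg1ge : 2 * g 0 ≤ g 1 := by
    have h1 : V (n + 2) ≤ V (n + 1*d) := by
      have h := hVle (n + 2) (by omega) (d - 2)
      have e : n + 2 + (d-2) = n + 1*d := by
        have : 1*d = d := by ring
        omega
      rw [e] at h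
      exact h
    have h2 := hV n
    have h3 := hVs n hn
    show 2 * g 0 ≤ V (n + 1*d)
    rw [hg0]
    omega
  -- coprimality
  have hcop : ∀ m, Nat.Coprime (V (m+1)) (V (m+2)) := by
    intro m
    induction m with
    | zero => exact hgcd1
    | succ m ih =>
      have hrec := hV (m+1)
      show Nat.Coprime (V (m+1+1)) (V (m+1+2))
      rw [hrec, add_comm (V (m+1+1)) (V (m+1))]
      have e : m + 1 + 1 = m + 2 := by omega
      rw [e]
      exact Nat.coprime_add_self_right.mpr ih.symm
  have hcopn : Nat.Coprime (V n) (V (n+1)) := by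
    obtain ⟨m, rfl⟩ : ∃ m, n = m + 1 := ⟨n - 1, by omega⟩
    have h := hcop m
    rwa [show m + 2 = m + 1 + 1 by omega] at h
  have hcopg : Nat.Coprime (g 0) (g 1) := by
    have hb : g 1 = Nat.fib d * V (n+1) + V n * Nat.fib (d-1) := by
      show V (n + 1*d) = _
      rw [congrV (show n + 1*d = n + d by ring), hVmd n]
      ring
    rw [hg0, hb]
    have h1 : Nat.Coprime (V n) (Nat.fib d * V (n+1)) :=
      Nat.Coprime.mul_right hgcd2 hcopn
    exact (Nat.coprime_add_mul_left_right _ _ _).mpr h1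
  -- u facts
  have hu0 : u 0 = 0 := by simp [hu]
  have hu1 : u 1 = 1 := by
    show Nat.fib (1*d) / Nat.fib d = 1
    rw [one_mul]
    exact Nat.div_self hfd
  have humul : ∀ k, u k * Nat.fib d = Nat.fib (k*d) := by
    intro k
    exact Nat.div_mul_cancel (Nat.fib_dvd d (k*d) (dvd_mul_left d k))
  have hurec : ∀ k, u (k+2) + u k = c * u (k+1) := by
    intro k
    have h := fib_F3 hd2 hde (k*d)
    rw [show k*d + 2*d = (k+2)*d by ring, show k*d + d = (k+1)*d by ring] at h
    rw [← humul (k+2), ← humul k, ← humul (k+1), ← hc] at h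
    have h2 : (u (k+2) + u k) * Nat.fib d = (c * u (k+1)) * Nat.fib d := by
      rw [add_mul, h]; ring
    exact Nat.eq_of_mul_eq_mul_right hfd h2
  have hc3 : 3 ≤ c := by
    have h1 : 2 ≤ Nat.fib (d+1) := by
      have h : Nat.fib 3 ≤ Nat.fib (d+1) := Nat.fib_mono (by omega)
      rw [show Nat.fib 3 = 2 by decide] at h; exact h
    have h2 : 1 ≤ Nat.fib (d-1) := Nat.fib_pos.mpr (by omega)
    omega
  have hugrow : ∀ k, u k ≤ u (k+1) ∧ 2 * u k ≤ u (k+1) := by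
    intro k
    induction k with
    | zero => simp [hu0, hu1]
    | succ k ih =>
      have h := hurec k
      have h3 : 3 * u (k+1) ≤ c * u (k+1) := Nat.mul_le_mul hc3 (le_refl _)
      constructor <;> linarith [ih.1, ih.2]
  have humono : Monotone u := monotone_nat_of_le_succ (fun k => (hugrow k).1)
  have hupos : ∀ k, 1 ≤ k → 1 ≤ u k := by
    intro k hk
    calc 1 = u 1 := hu1.symm
    _ ≤ u k := humono hk
  have hujlt : ∀ j, 0 < j → j < κ → u j < V n := by
    intro j hj0 hjκ
    by_contra h
    push_neg at h
    exact absurd (hκmin ⟨hj0, h⟩) (by omega)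
  have huκ : V n ≤ u κ := hκge
  have hule : ∀ k, κ ≤ k → V n ≤ u k := fun k hk => le_trans huκ (humono hk)
  -- d'Ocagne-style identity for u
  have hDu : ∀ r k, u (k+1) * u (r + k) = u k * u (r + k + 1) + u r := by
    intro r k
    induction k with
    | zero => simp [hu0, hu1]
    | succ k ih =>
      have h1 := hurec k
      have h2 := hurec (r + k)
      rw [show r + (k+1) = r + k + 1 by omega, show r + k + 1 + 1 = r + k + 2 by omega]
      zify at h1 h2 ih ⊢
      linear_combination (u (r+k+1) : ℤ) * h1 - (u (k+1) : ℤ) * h2 + ih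
  -- identity A : g (k+1) + u k * g 0 = u (k+1) * g 1
  have hIdA : ∀ k, g (k+1) + u k * g 0 = u (k+1) * g 1 := by
    intro k
    have H : ∀ k, (g (k+1) + u k * g 0 = u (k+1) * g 1)
        ∧ (g (k+2) + u (k+1) * g 0 = u (k+2) * g 1) := by
      intro k
      induction k with
      | zero =>
        constructor
        · simp [hu0, hu1]
        · have hu2 : u 2 = c := by have h := hurec 0; simp [hu0, hu1] at h; omega
          show g 2 + u 1 * g 0 = u 2 * g 1
          rw [hu1, hu2, one_mul]
          simpa using hgrec 0
      | succ k ih =>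
        obtain ⟨ih0, ih1⟩ := ih
        refine ⟨ih1, ?_⟩
        have hgr := hgrec (k+1)
        have hur1 := hurec (k+1)
        have hur0 := hurec k
        zify at ih0 ih1 hgr hur1 hur0 ⊢
        linear_combination (c : ℤ) * ih1 - ih0 - (g 1 : ℤ) * hur1 + (g 0 : ℤ) * hur0 + hgr
    exact (H k).1
  -- representation of g k for k ≥ κ
  have hRep : ∀ k, κ ≤ k → ∃ x y : ℕ, g k = x * g 0 + y * g 1 := by
    intro k hk
    obtain ⟨k', rfl⟩ : ∃ k', k = k' + 1 := ⟨k - 1, by omega⟩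
    set q := u (k'+1) / g 0 with hq
    set r := u (k'+1) % g 0 with hr
    have hqr : g 0 * q + r = u (k'+1) := Nat.div_add_mod _ _
    have hrlt : r < g 0 := Nat.mod_lt _ (hgpos 0)
    have haug : g 0 ≤ u (k'+1) := by rw [hg0]; exact hule _ hk
    have hq1 : 1 ≤ q := (Nat.one_le_div_iff (hgpos 0)).mpr haug
    have hxnn : u k' ≤ q * g 1 := by
      rcases Nat.lt_or_ge k' κ with hlt | hge
      · have hlt' : u k' < g 0 := by
          rcases Nat.eq_zero_or_pos k' with h0 | hp
          · rw [h0, hu0]; exact hgpos 0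
          · rw [hg0]; exact hujlt k' hp hlt
        calc u k' ≤ g 0 := le_of_lt hlt'
        _ ≤ g 1 := by omega
        _ ≤ q * g 1 := Nat.le_mul_of_pos_left _ hq1
      · have hak' : g 0 ≤ u k' := by rw [hg0]; exact hule _ hge
        have h2u : 2 * u k' ≤ u (k'+1) := (hugrow k').2
        have hqa : u k' ≤ q * g 0 := by linarith [hqr, hrlt, hak', h2u]
        calc u k' ≤ q * g 0 := hqa
        _ ≤ q * g 1 := Nat.mul_le_mul (le_refl q) (by omega)
    refine ⟨q * g 1 - u k', r, ?_⟩
    have hA := hIdA k'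
    zify [hxnn]
    zify at hqr hA
    linear_combination hA - (g 1 : ℤ) * hqr
  -- the key list lemma
  have keyList : ∀ (j : ℕ) (l : List ℕ), (∀ x ∈ l, ∃ k, k < j ∧ x = g k) →
      ∃ P Q R N : ℕ, l.sum + Q * g 0 = N * g 0 + P * g 1 ∧
        P * g 1 ≤ 2 * l.sum ∧
        P * u (j-1) = Q * u j + R ∧ (0 < P → 0 < R) := by
    intro j l
    induction l with
    | nil => intro _; exact ⟨0, 0, 0, 0, by simp, by simp, by simp, by omega⟩
    | cons x xs ih =>
      intro hl
      obtain ⟨P, Q, R, N, e1, e2, e3, e4⟩ := ih (fun y hy => hl y (List.mem_cons_of_mem _ hy))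
      obtain ⟨k, hkj, hxk⟩ := hl x List.mem_cons_self
      subst hxk
      rw [List.sum_cons]
      cases k with
      | zero =>
        refine ⟨P, Q, R, N+1, ?_, ?_, e3, e4⟩
        · zify at e1 ⊢; linear_combination e1
        · calc P * g 1 ≤ 2 * xs.sum := e2
          _ ≤ 2 * (g 0 + xs.sum) := by omega
      | succ k' =>
        have hk1 : k' + 1 ≤ j - 1 := by omega
        have hDu' := hDu (j - 1 - k') k'
        rw [show j - 1 - k' + k' = j - 1 by omega, show j - 1 + 1 = j by omega] at hDu'
        have hspos : 1 ≤ u (j - 1 - k') := hupos _ (by omega)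
        have hA := hIdA k'
        have h2g : u (k'+1) * g 1 ≤ 2 * g (k'+1) := by
          have h2u : 2 * u k' ≤ u (k'+1) := (hugrow k').2
          have hgij : g 0 ≤ g 1 := by omega
          have t1 : 2 * (u k' * g 0) ≤ u (k'+1) * g 0 := by
            calc 2 * (u k' * g 0) = (2 * u k') * g 0 := by ring
            _ ≤ u (k'+1) * g 0 := Nat.mul_le_mul h2u (le_refl _)
          have t2 : u (k'+1) * g 0 ≤ u (k'+1) * g 1 := Nat.mul_le_mul (le_refl _) hgij
          linarith [hA]
        refine ⟨P + u (k'+1), Q + u k', R + u (j-1-k'), N, ?_, ?_, ?_, ?_⟩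
        · zify at e1 hA ⊢; linear_combination e1 + hA
        · calc (P + u (k'+1)) * g 1 = P * g 1 + u (k'+1) * g 1 := by ring
          _ ≤ 2 * xs.sum + 2 * g (k'+1) := Nat.add_le_add e2 h2g
          _ = 2 * (g (k'+1) + xs.sum) := by ring
        · zify at e3 hDu' ⊢; linear_combination e3 + hDu'
        · intro _; omega
  -- the main non-representability lemma
  have not_sum : ∀ j, j < κ → ∀ l : List ℕ, (∀ x ∈ l, ∃ k, k < j ∧ x = g k) → l.sum ≠ g j := by
    intro j hjκ l hl heq
    cases j with
    | zero =>
      cases l with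
      | nil => simp at heq; exact absurd heq.symm (hgpos 0).ne'
      | cons x xs => obtain ⟨k, hk, _⟩ := hl x List.mem_cons_self; omega
    | succ j' =>
      obtain ⟨P, Q, R, N, e1, e2, e3, e4⟩ := keyList (j'+1) l hl
      rw [heq] at e1 e2
      simp only [Nat.succ_sub_one] at e3
      have hA := hIdA j'
      have hult : u (j'+1) < g 0 := by rw [hg0]; exact hujlt _ (by omega) hjκ
      have hupos' : 1 ≤ u (j'+1) := hupos _ (by omega)
      have hg1pos : 0 < g 1 := hgpos 1
      have hgj_le : g (j'+1) ≤ u (j'+1) * g 1 := by linarith [hA, Nat.zero_le (u j' * g 0)]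
      have hP2 : P ≤ 2 * u (j'+1) := by
        have h2 : P * g 1 ≤ (2 * u (j'+1)) * g 1 := by
          calc P * g 1 ≤ 2 * g (j'+1) := e2
          _ ≤ 2 * (u (j'+1) * g 1) := Nat.mul_le_mul (le_refl 2) hgj_le
          _ = (2 * u (j'+1)) * g 1 := by ring
        exact Nat.le_of_mul_le_mul_right h2 hg1pos
      have ze1 := e1; have zA := hA
      zify at ze1 zA
      have hcopz : IsCoprime (g 0 : ℤ) (g 1 : ℤ) := Nat.isCoprime_iff_coprime.mpr hcopg
      have hdvd : (g 0 : ℤ) ∣ ((P : ℤ) - u (j'+1)) * g 1 := by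
        refine ⟨(Q : ℤ) - u j' - N, ?_⟩
        linear_combination zA - ze1
      have hz : (g 0 : ℤ) ∣ ((P : ℤ) - u (j'+1)) := hcopz.dvd_of_dvd_mul_right hdvd
      have hPz : (P : ℤ) = u (j'+1) := by
        have h1 : (P : ℤ) ≤ 2 * u (j'+1) := by exact_mod_cast hP2
        have h2 : (u (j'+1) : ℤ) < g 0 := by exact_mod_cast hult
        have habs : |(P : ℤ) - u (j'+1)| < g 0 := by rw [abs_lt]; omega
        have h0 := Int.eq_zero_of_abs_lt_dvd hz habs
        omega
      have hQz : (Q : ℤ) = (u j' : ℤ) + N := by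
        have hg0z : (g 0 : ℤ) ≠ 0 := by exact_mod_cast (hgpos 0).ne'
        have h0 : ((Q : ℤ) - u j' - N) * g 0 = 0 := by
          linear_combination ze1 - zA + (g 1 : ℤ) * hPz
        rcases mul_eq_zero.mp h0 with h | h
        · omega
        · exact absurd h hg0z
      have hdet : (P : ℤ) * u j' = (Q : ℤ) * u (j'+1) + R := by exact_mod_cast e3
      have hNR : (N : ℤ) * u (j'+1) + R = 0 := by
        linear_combination (-1 : ℤ) * hdet + (u j' : ℤ) * hPz - (u (j'+1) : ℤ) * hQz
      have hNRn : N * u (j'+1) + R = 0 := by exact_mod_cast hNR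
      have hPpos : 0 < P := by
        have : (1 : ℤ) ≤ (P : ℤ) := by rw [hPz]; exact_mod_cast hupos'
        exact_mod_cast this
      have := e4 hPpos
      omega
  -- generators are in the closure
  have hgenS : ∀ k, g k ∈ AddSubmonoid.closure Gens :=
    fun k => AddSubmonoid.subset_closure ⟨k, rfl⟩
  -- characterize the minimal generating set
  have hMGS : minGenSet (AddSubmonoid.closure Gens) = g '' Set.Iio κ := by
    ext m
    constructor
    · rintro ⟨hmS, hm0, hmin⟩
      obtain ⟨l, hlmem, hlsum⟩ := AddSubmonoid.exists_list_of_mem_closure hmS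
      cases l with
      | nil => simp at hlsum; exact absurd hlsum.symm hm0
      | cons x xs =>
        cases xs with
        | nil =>
          obtain ⟨k, hk⟩ := hlmem x (by simp)
          have hmx : m = x := by simpa using hlsum.symm
          have hmgk : m = g k := by rw [hmx, hk]
          by_cases hkκ : k < κ
          · exact ⟨k, hkκ, hmgk.symm⟩
          · exfalso
            push_neg at hkκ
            obtain ⟨xx, yy, hxy⟩ := hRep k hkκ
            have hgκk : g κ ≤ g k := hgmono.monotone hkκ
            have hg0k : g 0 < g k := lt_of_lt_of_le (hgmono hκ0) hgκk
            rcases Nat.eq_zero_or_pos xx with hxx0 | hxxp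
            · subst hxx0
              rw [zero_mul, zero_add] at hxy
              match yy, hxy with
              | 0, hxy => simp at hxy; exact absurd hxy (hgpos k).ne'
              | 1, hxy =>
                -- g k = g 1, so k = 1 and κ = 1, g 0 = 1
                rw [one_mul] at hxy
                have hk1 : k = 1 := hgmono.injective hxy
                have hκ1 : κ = 1 := by omega
                have hg0one : g 0 = 1 := by
                  have h1 : V n ≤ u 1 := by rw [← hκ1]; exact huκ
                  rw [hu1] at h1
                  have h2 := hVpos n hn
                  rw [hg0]; omega
                have hBmem : g 1 - 1 ∈ AddSubmonoid.closure Gens := by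
                  have h := AddSubmonoid.nsmul_mem (AddSubmonoid.closure Gens) (hgenS 0) (g 1 - 1)
                  rwa [smul_eq_mul, hg0one, mul_one] at h
                exact hmin (g 0) (g 1 - 1) (hgenS 0) hBmem (hgpos 0).ne'
                  (by omega) (by rw [hmgk, hk1]; omega)
              | (y'+2), hxy =>
                have hBmem : (y'+1) * g 1 ∈ AddSubmonoid.closure Gens := by
                  have h := AddSubmonoid.nsmul_mem (AddSubmonoid.closure Gens) (hgenS 1) (y'+1)
                  rwa [smul_eq_mul] at h
                refine hmin (g 1) ((y'+1) * g 1) (hgenS 1) hBmem (hgpos 1).ne'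
                  (Nat.mul_pos (by omega) (hgpos 1)).ne' ?_
                rw [hmgk, hxy]; ring
            · obtain ⟨x', rfl⟩ : ∃ x', xx = x' + 1 := ⟨xx - 1, by omega⟩
              have hBval : g k = g 0 + (x' * g 0 + yy * g 1) := by rw [hxy]; ring
              have hBmem : x' * g 0 + yy * g 1 ∈ AddSubmonoid.closure Gens := by
                refine AddSubmonoid.add_mem _ ?_ ?_
                · have h := AddSubmonoid.nsmul_mem (AddSubmonoid.closure Gens) (hgenS 0) x'
                  rwa [smul_eq_mul] at h
                · have h := AddSubmonoid.nsmul_mem (AddSubmonoid.closure Gens) (hgenS 1) yy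
                  rwa [smul_eq_mul] at h
              refine hmin (g 0) (x' * g 0 + yy * g 1) (hgenS 0) hBmem (hgpos 0).ne'
                (by omega) (by rw [hmgk]; exact hBval)
        | cons y ys =>
          exfalso
          have hxg := hlmem x (by simp)
          have hxS : x ∈ AddSubmonoid.closure Gens := AddSubmonoid.subset_closure hxg
          have hBS : (y :: ys).sum ∈ AddSubmonoid.closure Gens := by
            apply AddSubmonoid.list_sum_mem
            intro z hz
            exact AddSubmonoid.subset_closure (hlmem z (by simp [hz]))
          have hx0 : x ≠ 0 := by
            obtain ⟨k, hk⟩ := hxg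
            rw [hk]
            exact (hVpos _ (by omega)).ne'
          have hy0 : (y :: ys).sum ≠ 0 := by
            obtain ⟨k, hk⟩ := hlmem y (by simp)
            have hy : 0 < y := by rw [hk]; exact hVpos _ (by omega)
            simp only [List.sum_cons]
            omega
          exact hmin x (y :: ys).sum hxS hBS hx0 hy0 (by rw [← hlsum]; simp)
    · rintro ⟨j, hj, rfl⟩
      refine ⟨hgenS j, (hgpos j).ne', ?_⟩
      intro A B hA hB hA0 hB0 heq
      obtain ⟨lA, hlA, hsA⟩ := AddSubmonoid.exists_list_of_mem_closure hA
      obtain ⟨lB, hlB, hsB⟩ := AddSubmonoid.exists_list_of_mem_closure hB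
      have hsum : (lA ++ lB).sum = g j := by rw [List.sum_append, hsA, hsB, ← heq]
      refine not_sum j hj (lA ++ lB) ?_ hsum
      intro x hx
      have hxg : x ∈ Gens := by
        rcases List.mem_append.mp hx with h | h
        exacts [hlA x h, hlB x h]
      obtain ⟨k, hk⟩ := hxg
      refine ⟨k, ?_, hk⟩
      have hxle : x ≤ g j := by
        rw [← hsum]
        exact List.single_le_sum (fun _ _ => Nat.zero_le _) x hx
      have hkle : k ≤ j := by
        by_contra hgt
        push_neg at hgt
        have h := hgmono hgt
        rw [hk] at hxle
        change g k ≤ g j at hxle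
        omega
      rcases Nat.lt_or_ge k j with h | h
      · exact h
      · exfalso
        have hkj : k = j := by omega
        have hxe : x = g j := by rw [hk, hkj]
        have hApos : 0 < A := Nat.pos_of_ne_zero hA0
        have hBpos : 0 < B := Nat.pos_of_ne_zero hB0
        rcases List.mem_append.mp hx with hxa | hxb
        · have hle : x ≤ lA.sum := List.single_le_sum (fun _ _ => Nat.zero_le _) x hxa
          rw [hsA, hxe] at hle
          omega
        · have hle : x ≤ lB.sum := List.single_le_sum (fun _ _ => Nat.zero_le _) x hxb
          rw [hsB, hxe] at hle
          omega
  -- count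
  rw [hMGS, Set.ncard_image_of_injOn (hgmono.injective.injOn)]
  have hIio : Set.Iio κ = ↑(Finset.range κ) := by ext x; simp
  rw [hIio, Set.ncard_coe_finset, Finset.card_range]
end

section
/- Let d be even, gcd(F_n, F_d) = 1, and S₁ = ⟨F_n, F_{n+d}, F_{n+2d}, …⟩. If d = 2, or d > 2 and n ≤ 2, then the embedding dimension of S₁ is 1 + ⌈(n−2)/d⌉; if d > 2 and n > 2, it is 1 + ⌈(n−1)/d⌉. -/
open Nat AddSubmonoid Finset

lemma fib_sq (c : ℕ) : (fib (c+1) : ℤ)^2 - fib (c+1) * fib c - (fib c : ℤ)^2 = (-1)^c := by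
  induction c with
  | zero => simp
  | succ c ih =>
    have h := Nat.fib_add_two (n := c)
    push_cast [h]
    push_cast at ih
    ring_nf
    ring_nf at ih
    linarith [ih]

lemma docagneZ (c u : ℕ) :
    (fib c * fib (u + c + 1) : ℤ) = fib (c+1) * fib (u + c) + (-1)^(c+1) * fib u := by
  cases c with
  | zero => simp
  | succ c =>
    have e1 : (fib (u + (c+1) + 1) : ℤ) = fib (u+1) * fib c + fib (u+2) * fib (c+1) := by
      have := Nat.fib_add (u+1) c
      rw [show u + 1 + c + 1 = u + (c+1) + 1 by ring] at this
      exact_mod_cast this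
    have e2 : (fib (u + (c+1)) : ℤ) = fib u * fib c + fib (u+1) * fib (c+1) := by
      have := Nat.fib_add u c
      rw [show u + c + 1 = u + (c+1) by ring] at this
      exact_mod_cast this
    have e3 : (fib (c+2) : ℤ) = fib c + fib (c+1) := by exact_mod_cast Nat.fib_add_two
    have e4 : (fib (u+2) : ℤ) = fib u + fib (u+1) := by exact_mod_cast Nat.fib_add_two
    have hs := fib_sq c
    rw [e1, e2, e3, e4]
    have : ((-1:ℤ))^(c+1+1) = (-1)^c := by ring
    rw [this]
    linear_combination (fib u : ℤ) * hs

lemma vajdaZ (c u m : ℕ) :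
    (fib (u + c + 1) * fib (m + c + 2) : ℤ)
      = fib (c+1) * fib (u + m + c + 2) + (-1)^(c+1) * fib u * fib (m+1) := by
  induction c with
  | zero =>
    have := Nat.fib_add u (m+1)
    rw [show u + (m+1) + 1 = u + m + 0 + 2 by ring] at this
    push_cast [this]
    ring
  | succ c _ =>
    have e1 : (fib (u + (c+1) + 1) : ℤ) = fib (u+1) * fib c + fib (u+2) * fib (c+1) := by
      have := Nat.fib_add (u+1) c
      rw [show u + 1 + c + 1 = u + (c+1) + 1 by ring] at this
      exact_mod_cast this
    have e2 : (fib (m + (c+1) + 2) : ℤ) = fib (m+2) * fib c + fib (m+3) * fib (c+1) := by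
      have := Nat.fib_add (m+2) c
      rw [show m + 2 + c + 1 = m + (c+1) + 2 by ring] at this
      exact_mod_cast this
    have e3 : (fib (u + m + (c+1) + 2) : ℤ) = fib (u+m+2) * fib c + fib (u+m+3) * fib (c+1) := by
      have := Nat.fib_add (u+m+2) c
      rw [show u + m + 2 + c + 1 = u + m + (c+1) + 2 by ring] at this
      exact_mod_cast this
    have e4 : (fib (u+m+2) : ℤ) = fib u * fib (m+1) + fib (u+1) * fib (m+2) := by
      have := Nat.fib_add u (m+1)
      rw [show u + (m+1) + 1 = u + m + 2 by ring] at this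
      exact_mod_cast this
    have e5 : (fib (u+m+3) : ℤ) = fib (u+1) * fib (m+1) + fib (u+2) * fib (m+2) := by
      have := Nat.fib_add (u+1) (m+1)
      rw [show u + 1 + (m+1) + 1 = u + m + 3 by ring] at this
      exact_mod_cast this
    have f1 : (fib (u+2) : ℤ) = fib u + fib (u+1) := by exact_mod_cast Nat.fib_add_two
    have f2 : (fib (m+2) : ℤ) = fib m + fib (m+1) := by exact_mod_cast Nat.fib_add_two
    have f3 : (fib (m+3) : ℤ) = fib (m+1) + fib (m+2) := by exact_mod_cast Nat.fib_add_two
    have f4 : (fib (c+2) : ℤ) = fib c + fib (c+1) := by exact_mod_cast Nat.fib_add_two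
    have hs := fib_sq c
    rw [e1, e2, e3, e4, e5, f4, f3, f2, f1]
    have hsgn : ((-1:ℤ))^(c+1+1) = (-1)^c := by ring
    rw [hsgn]
    linear_combination (fib u * fib (m+1) : ℤ) * hs

lemma docagneN (c u : ℕ) (hc : Odd c) :
    fib c * fib (u + c + 1) = fib (c+1) * fib (u + c) + fib u := by
  have h := docagneZ c u
  rw [Even.neg_one_pow (by simpa using hc.add_one)] at h
  have : (fib c * fib (u + c + 1) : ℤ) = fib (c+1) * fib (u + c) + fib u := by linarith
  exact_mod_cast this

lemma vajdaN (c u m : ℕ) (hc : Odd c) :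
    fib (u + c + 1) * fib (m + c + 2) = fib (c+1) * fib (u + m + c + 2) + fib u * fib (m+1) := by
  have h := vajdaZ c u m
  rw [Even.neg_one_pow (by simpa using hc.add_one)] at h
  have : (fib (u + c + 1) * fib (m + c + 2) : ℤ)
      = fib (c+1) * fib (u + m + c + 2) + fib u * fib (m+1) := by linarith
  exact_mod_cast this

lemma fibrec (c m : ℕ) (hc : Odd c) :
    fib (m + (c+1) + (c+1)) + fib m = (fib c + fib (c+2)) * fib (m + (c+1)) := by
  have h1 : fib (c + (m + c + 1) + 1) = fib c * fib (m + c + 1) + fib (c+1) * fib (m + c + 2) :=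
    Nat.fib_add c (m + c + 1)
  have h2 : fib (c+1) * fib (m + (c+1) + 1) + fib m = fib (c+2) * fib (m + (c+1)) := by
    have h := docagneZ (c+1) m
    have hsgn : ((-1:ℤ))^(c+1+1) = -1 := Odd.neg_one_pow (by obtain ⟨k, rfl⟩ := hc; exact ⟨k+1, by ring⟩)
    rw [hsgn] at h
    have : (fib (c+1) * fib (m + (c+1) + 1) : ℤ) + fib m = fib (c+2) * fib (m + (c+1)) := by
      linarith [h]
    exact_mod_cast this
  have e1 : m + (c+1) + (c+1) = c + (m + c + 1) + 1 := by ring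
  have e2 : m + c + 2 = m + (c+1) + 1 := by ring
  rw [e1, h1, e2]
  have e3 : m + c + 1 = m + (c + 1) := by ring
  rw [e3] at h1 ⊢
  nlinarith [h2]

lemma fib_lt_fib' {a b : ℕ} (h2 : 2 ≤ a) (h : a < b) : fib a < fib b :=
  (Nat.fib_lt_fib h2).mpr h

lemma core (c n q : ℕ) (hc : Odd c) (hn : 3 ≤ n) (hq : 1 ≤ q)
    (hcop : Nat.Coprime (fib n) (fib (c+1)))
    (hcase : (q*(c+1) = n - 2 ∧ c = 1) ∨ q*(c+1) = n - 1 ∨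
      (n + 1 ≤ q*(c+1) ∧ q*(c+1) + 2 ≤ n + c + 1)) :
    (minGenSet (closure {m | ∃ k : ℕ, m = fib (n + k*(c+1))})).ncard = q + 1 := by
  have hc1 : 1 ≤ c := hc.pos
  set G : ℕ → ℕ := fun i => fib (n + i * (c+1)) with hG
  set S : AddSubmonoid ℕ := closure {m | ∃ k : ℕ, m = fib (n + k*(c+1))} with hSdef
  set A : Set ℕ := G '' Set.Iic q with hA
  set S' : AddSubmonoid ℕ := closure A with hS'
  have hfn2 : 2 ≤ fib n := by
    calc 2 = fib 3 := rfl
    _ ≤ fib n := fib_mono hn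
  have hG0 : G 0 = fib n := by simp [hG]
  have hGige : ∀ i, 2 ≤ G i := fun i => le_trans hfn2 (fib_mono (by omega))
  have hGmono : ∀ i j : ℕ, i < j → G i < G j := by
    intro i j hij
    apply fib_lt_fib' (by omega)
    have : i * (c+1) < j * (c+1) := Nat.mul_lt_mul_of_pos_right hij (by omega)
    omega
  have hmemA : ∀ i, i ≤ q → G i ∈ S' := fun i hi => subset_closure ⟨i, hi, rfl⟩
  have hmulmem : ∀ (T : AddSubmonoid ℕ) (t x : ℕ), x ∈ T → t * x ∈ T := by
    intro T t x hx
    induction t with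
    | zero => simpa using T.zero_mem
    | succ t ih => rw [succ_mul]; exact add_mem ih hx
  have hmul : ∀ (t x : ℕ), x ∈ S' → t * x ∈ S' := fun t x hx => hmulmem S' t x hx
  -- the inductive step
  have hstep : ∀ k, (G k ∈ S' ∧ ∃ δ ∈ S', G (k+1) = G k + δ) →
      (G (k+1) ∈ S' ∧ ∃ δ ∈ S', G (k+2) = G (k+1) + δ) := by
    rintro k ⟨hk, δ, hδS, hδ⟩
    have hk1 : G (k+1) ∈ S' := hδ ▸ add_mem hk hδS
    refine ⟨hk1, δ + (fib c + fib (c+2) - 2) * G (k+1),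
      add_mem hδS (hmul _ _ hk1), ?_⟩
    have hrec : G (k+2) + G k = (fib c + fib (c+2)) * G (k+1) := by
      have h := fibrec c (n + k*(c+1)) hc
      have e1 : n + k*(c+1) + (c+1) + (c+1) = n + (k+2)*(c+1) := by ring
      have e2 : n + k*(c+1) + (c+1) = n + (k+1)*(c+1) := by ring
      rw [e1, e2] at h
      exact h
    have hL : 3 ≤ fib c + fib (c+2) := by
      have h1 : 1 ≤ fib c := Nat.fib_pos.mpr (by omega)
      have h2 : 2 ≤ fib (c+2) := by
        calc 2 = fib 3 := rfl
        _ ≤ fib (c+2) := fib_mono (by omega)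
      omega
    have hsub : (fib c + fib (c+2) - 2) * G (k+1) + 2 * G (k+1)
        = (fib c + fib (c+2)) * G (k+1) := by
      rw [← add_mul]
      congr 1
      omega
    linarith [hrec, hδ, hsub]
  -- base cases / generation
  -- produce base data : k₀ ≤ q+1 with Φ(k₀) and small memberships
  have hbase : ∃ k₀, k₀ ≤ q + 1 ∧ (∀ k ≤ k₀, G k ∈ S') ∧
      (G k₀ ∈ S' ∧ ∃ δ ∈ S', G (k₀+1) = G k₀ + δ) := by
    rcases hcase with ⟨hq2, hc2⟩ | hq1 | ⟨hq3a, hq3b⟩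
    · -- C1 : d = 2, q*2 = n-2
      subst hc2
      set X := 2 * fib (n+1) - fib n with hX
      have hGq1 : G (q+1) = X * G 0 := by
        have e : n + (q+1)*(1+1) = 2*n := by omega
        show fib (n + (q+1)*(1+1)) = X * G 0
        rw [e, fib_two_mul, hG0, mul_comm]
      have hGq1mem : G (q+1) ∈ S' := hGq1 ▸ hmul X (G 0) (hmemA 0 (by omega))
      obtain ⟨m, rfl⟩ : ∃ m, n = m + 1 := ⟨n - 1, by omega⟩
      have hid : fib (2*(m+1)+1) = (2 * fib (m+1)) * fib (m+1) + fib m * fib (m+3) := by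
        rw [fib_two_mul_add_one]
        have e2 : fib (m+2) = fib m + fib (m+1) := fib_add_two
        have e3 : fib (m+3) = fib (m+1) + fib (m+2) := fib_add_two
        rw [e3, e2]
        ring
      refine ⟨q+1, le_refl _, ?_, hGq1mem, (2 * fib (m+1)) * G 0 + fib m * G 1,
        add_mem (hmul _ _ (hmemA 0 (by omega))) (hmul _ _ (hmemA 1 (by omega))), ?_⟩
      · intro k hk
        rcases Nat.lt_or_ge k (q+1) with h | h
        · exact hmemA k (by omega)
        · have : k = q + 1 := by omega
          rw [this]; exact hGq1mem
      · have hgq2 : G (q+2) = fib (2*(m+1) + 2) := by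
          show fib ((m+1) + (q+2)*(1+1)) = _
          congr 1 <;> omega
        have hgq1' : G (q+1) = fib (2*(m+1)) := by
          show fib ((m+1) + (q+1)*(1+1)) = _
          congr 1 <;> omega
        have hg1 : G 1 = fib (m+3) := by
          show fib ((m+1) + 1*(1+1)) = _
          congr 1 <;> omega
        have hstep2 : fib (2*(m+1)+2) = fib (2*(m+1)) + fib (2*(m+1)+1) := fib_add_two
        rw [hgq2, hgq1', hg1, hG0, hstep2, hid]
    · -- C2 : q*(c+1) = n-1
      set X := 2 * fib (n+1) - fib n with hX
      have hsplit : G (q+1) = fib c * G q + (fib (c+1) * X) * G 0 := by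
        have e1 : n + (q+1)*(c+1) = c + (n + q*(c+1)) + 1 := by ring
        show fib (n + (q+1)*(c+1)) = _
        rw [e1, Nat.fib_add]
        have e2 : n + q*(c+1) + 1 = 2*n := by omega
        rw [e2, fib_two_mul, hG0]
        show _ = fib c * fib (n + q * (c+1)) + fib (c+1) * X * fib n
        ring
      obtain ⟨t, ht⟩ : ∃ t, fib c = t + 1 := ⟨fib c - 1, by
        have : 0 < fib c := Nat.fib_pos.mpr (by omega); omega⟩
      refine ⟨q, by omega, fun k hk => hmemA k hk, hmemA q le_rfl,
        t * G q + (fib (c+1) * X) * G 0,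
        add_mem (hmul _ _ (hmemA q le_rfl)) (hmul _ _ (hmemA 0 (by omega))), ?_⟩
      rw [hsplit, ht]
      ring
    · -- C3 : n+1 ≤ q*(c+1) ≤ n+c-1
      have hc3 : 3 ≤ c := by
        rcases hc with ⟨j, hj⟩
        rcases Nat.lt_or_ge j 1 with h | h
        · exfalso
          interval_cases j
          omega
        · omega
      obtain ⟨ν, rfl⟩ : ∃ ν, n = ν + 1 := ⟨n - 1, by omega⟩
      have hG1 : G 1 = fib (ν + c + 2) := by
        show fib ((ν+1) + 1*(c+1)) = _
        congr 1
        ring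
      rcases Nat.lt_or_ge q 2 with hq2 | hq2
      · -- q = 1
        have hq1 : q = 1 := by omega
        subst hq1
        have hkey := docagneN c (ν+1) hc
        -- fib c * fib (ν+1+c+1) = fib (c+1) * fib (ν+1+c) + fib (ν+1)
        have hsplit : G 2 = fib (c+1) * fib (ν + 1 + c) + fib (c+2) * fib (ν+1+c+1) := by
          have e1 : (ν+1) + 2*(c+1) = (c+1) + (ν + 1 + c) + 1 := by ring
          show fib ((ν+1) + 2*(c+1)) = _
          rw [e1, Nat.fib_add]
        have hBle : fib (ν+1) ≤ fib c := fib_mono (by omega)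
        have hAle : 1 ≤ fib ((ν+1) + c + 1) := Nat.fib_pos.mpr (by omega)
        have hrep : G 2 = (fib (c+2) + (fib c - fib (ν+1))) * G 1
            + (fib ((ν+1)+c+1) - 1) * G 0 := by
          have hg1' : G 1 = fib ((ν+1) + c + 1) := by rw [hG1]; congr 1; ring
          rw [hsplit, hg1', hG0]
          rw [show (ν+1) + c + 1 = ν + 1 + c + 1 from rfl]
          have hkeyZ : (fib c : ℤ) * fib ((ν+1) + c + 1)
              = fib (c+1) * fib (ν + 1 + c) + fib (ν+1) := by exact_mod_cast hkey
          zify [hBle, hAle]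
          linear_combination -hkeyZ
        obtain ⟨t, ht⟩ : ∃ t, fib (c+2) + (fib c - fib (ν+1)) = t + 1 := by
          have : 0 < fib (c+2) := Nat.fib_pos.mpr (by omega)
          exact ⟨fib (c+2) + (fib c - fib (ν+1)) - 1, by omega⟩
        refine ⟨1, by omega, fun k hk => hmemA k (by omega), hmemA 1 (by omega),
          t * G 1 + (fib ((ν+1)+c+1) - 1) * G 0,
          add_mem (hmul _ _ (hmemA 1 (by omega))) (hmul _ _ (hmemA 0 (by omega))), ?_⟩
        rw [hrep, ht]
        ring
      · -- q ≥ 2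
        obtain ⟨p, rfl⟩ : ∃ p, q = p + 2 := ⟨q - 2, by omega⟩
        obtain ⟨w, hw⟩ : ∃ w, (p+1)*(c+1) = w + 1 := ⟨(p+1)*(c+1) - 1, by
          have h2 : 1*1 ≤ (p+1)*(c+1) := Nat.mul_le_mul (by omega) (by omega)
          omega⟩
        have hkey := vajdaN c w ν hc
        -- fib (w+c+1) * fib (ν+c+2) = fib (c+1) * fib (w+ν+c+2) + fib w * fib (ν+1)
        have haux2 : (p+2)*(c+1) = w + c + 2 := by
          have e : (p+2)*(c+1) = (p+1)*(c+1) + (c+1) := by ring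
          rw [hw] at e
          omega
        have haux3 : (p+3)*(c+1) = w + 2*c + 3 := by
          have e : (p+3)*(c+1) = (p+1)*(c+1) + 2*(c+1) := by ring
          rw [hw] at e
          omega
        have hGp2 : G (p+2) = fib (w + ν + c + 3) := by
          show fib ((ν+1) + (p+2)*(c+1)) = _
          congr 1 <;> omega
        have hsplit : G (p+3) = fib (c+1) * fib (w + ν + c + 2) + fib (c+2) * fib (w+ν+c+3) := by
          have e1 : (ν+1) + (p+3)*(c+1) = (c+1) + (w + ν + c + 2) + 1 := by omega
          show fib ((ν+1) + (p+3)*(c+1)) = _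
          rw [e1, Nat.fib_add]
        have hBle : fib (ν+1) ≤ fib (w + c + 1) := fib_mono (by omega)
        have hAle : fib w ≤ fib (ν + c + 2) := fib_mono (by omega)
        have hrep : G (p+3) = fib (c+2) * G (p+2)
            + (fib (w+c+1) - fib (ν+1)) * G 1 + (fib (ν+c+2) - fib w) * G 0 := by
          rw [hsplit, hGp2, hG1, hG0]
          have hkeyZ : (fib (w+c+1) : ℤ) * fib (ν+c+2)
              = fib (c+1) * fib (w+ν+c+2) + fib w * fib (ν+1) := by exact_mod_cast hkey
          zify [hBle, hAle]
          linear_combination -hkeyZ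
        obtain ⟨t, ht⟩ : ∃ t, fib (c+2) = t + 1 := ⟨fib (c+2) - 1, by
          have : 0 < fib (c+2) := Nat.fib_pos.mpr (by omega); omega⟩
        refine ⟨p+2, by omega, fun k hk => hmemA k hk, hmemA (p+2) le_rfl,
          t * G (p+2) + (fib (w+c+1) - fib (ν+1)) * G 1 + (fib (ν+c+2) - fib w) * G 0,
          add_mem (add_mem (hmul _ _ (hmemA (p+2) le_rfl)) (hmul _ _ (hmemA 1 (by omega))))
            (hmul _ _ (hmemA 0 (by omega))), ?_⟩
        rw [hrep, ht]
        ring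
  have hgen : ∀ k, G k ∈ S' := by
    obtain ⟨k₀, hk₀q, hsmall, hΦ₀⟩ := hbase
    have hΦ : ∀ k, k₀ ≤ k → (G k ∈ S' ∧ ∃ δ ∈ S', G (k+1) = G k + δ) := by
      intro k hk
      induction k, hk using Nat.le_induction with
      | base => exact hΦ₀
      | succ k hk ih => exact hstep k ih
    intro k
    rcases Nat.lt_or_ge k k₀ with h | h
    · exact hsmall k (by omega)
    · exact (hΦ k h).1
  -- S = S'
  have hSS' : S = S' := by
    apply le_antisymm
    · rw [hSdef]
      apply closure_le.mpr
      rintro x ⟨k, rfl⟩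
      exact hgen k
    · rw [hS']
      apply closure_le.mpr
      rintro x ⟨i, _, rfl⟩
      exact subset_closure ⟨i, rfl⟩
  -- representation
  have hsum_mem : ∀ f : ℕ → ℕ, (∑ j ∈ range (q+1), f j * G j) ∈ S := by
    intro f
    refine sum_mem fun j _ => ?_
    exact hmulmem S (f j) (G j) (subset_closure ⟨j, rfl⟩)
  have hrepr : ∀ x ∈ S, ∃ f : ℕ → ℕ, x = ∑ j ∈ range (q+1), f j * G j := by
    intro x hx
    rw [hSS', hS'] at hx
    induction hx using AddSubmonoid.closure_induction with
    | mem y hy =>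
      obtain ⟨i, hi, rfl⟩ := hy
      refine ⟨fun j => if j = i then 1 else 0, ?_⟩
      rw [Finset.sum_eq_single i]
      · simp
      · intro j _ hj; simp [hj]
      · intro h; exact absurd (mem_range.mpr (by exact Nat.lt_succ_of_le hi)) h
    | zero => exact ⟨fun _ => 0, by simp⟩
    | add y z _ _ hy hz =>
      obtain ⟨fy, hfy⟩ := hy
      obtain ⟨fz, hfz⟩ := hz
      refine ⟨fun j => fy j + fz j, ?_⟩
      rw [hfy, hfz, ← Finset.sum_add_distrib]
      apply Finset.sum_congr rfl
      intro j _
      ring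
  -- key uniqueness claim
  -- size bound
  have hub : fib (q*(c+1)) < fib n * fib (c+1) := by
    have hfc1 : 0 < fib (c+1) := Nat.fib_pos.mpr (by omega)
    rcases hcase with ⟨hq2, _⟩ | hq1 | ⟨hq3a, hq3b⟩
    · have h1 : fib (q*(c+1)) ≤ fib (n-1) := fib_mono (by omega)
      have h2 : fib (n-1) < fib n := fib_lt_fib' (by omega) (by omega)
      have h3 : fib n ≤ fib n * fib (c+1) := Nat.le_mul_of_pos_right _ hfc1
      omega
    · have h1 : fib (q*(c+1)) ≤ fib (n-1) := fib_mono (by omega)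
      have h2 : fib (n-1) < fib n := fib_lt_fib' (by omega) (by omega)
      have h3 : fib n ≤ fib n * fib (c+1) := Nat.le_mul_of_pos_right _ hfc1
      omega
    · have hc3 : 3 ≤ c := by
        rcases hc with ⟨j, hj⟩
        rcases Nat.lt_or_ge j 1 with h | h
        · exfalso
          interval_cases j
          omega
        · omega
      obtain ⟨γ, rfl⟩ : ∃ γ, c = γ + 2 := ⟨c - 2, by omega⟩
      obtain ⟨μ, rfl⟩ : ∃ μ, n = μ + 2 := ⟨n - 2, by omega⟩
      show fib (q*(γ+3)) < fib (μ+2) * fib (γ+3)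
      have heq1 : q*(γ+2+1) = q*(γ+3) := rfl
      have E1 : fib (μ+γ+4) = fib (μ+γ+2) + fib (μ+γ+3) := by
        have h := Nat.fib_add_two (n := μ+γ+2)
        rw [show μ+γ+2+2 = μ+γ+4 from by ring, show μ+γ+2+1 = μ+γ+3 from by ring] at h
        exact h
      have E2 : fib (μ+γ+4) = fib (γ+2) * fib (μ+1) + fib (γ+3) * fib (μ+2) := by
        have := Nat.fib_add (γ+2) (μ+1)
        rw [show γ+2+(μ+1)+1 = μ+γ+4 from by ring] at this
        exact this
      have E3 : fib (μ+γ+2) = fib (γ+1) * fib μ + fib (γ+2) * fib (μ+1) := by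
        have := Nat.fib_add (γ+1) μ
        rw [show γ+1+μ+1 = μ+γ+2 from by ring] at this
        exact this
      have hprod : 1 ≤ fib (γ+1) * fib μ := by
        have h1 : 1 ≤ fib (γ+1) := Nat.fib_pos.mpr (by omega)
        have h2 : 1 ≤ fib μ := Nat.fib_pos.mpr (by omega)
        calc 1 = 1 * 1 := rfl
        _ ≤ fib (γ+1) * fib μ := Nat.mul_le_mul h1 h2
      have hlt : fib (μ+γ+3) < fib (μ+2) * fib (γ+3) := by
        have : fib (μ+2) * fib (γ+3) = fib (γ+3) * fib (μ+2) := by ring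
        linarith [E1, E2, E3, hprod]
      have hle : fib (q*(γ+3)) ≤ fib (μ+γ+3) := fib_mono (by omega)
      omega
  -- key uniqueness claim
  have claimM : ∀ i, i ≤ q → ∀ f : ℕ → ℕ,
      (∑ j ∈ range (q+1), f j * G j) = G i → (∑ j ∈ range (q+1), f j) = 1 := by
    intro i hi f hf
    have hzero : ∀ j, j ∈ range (q+1) → i < j → f j = 0 := by
      intro j hj hij
      by_contra hfj
      have h1 : G j ≤ f j * G j := Nat.le_mul_of_pos_left _ (by omega)
      have h2 : f j * G j ≤ ∑ j ∈ range (q+1), f j * G j :=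
        Finset.single_le_sum (f := fun j => f j * G j) (fun _ _ => Nat.zero_le _) hj
      have h3 := hGmono i j hij
      linarith [hf]
    have himem : i ∈ range (q+1) := mem_range.mpr (by omega)
    have hfile : f i ≤ 1 := by
      by_contra hfi
      have h1 : 2 * G i ≤ f i * G i := mul_le_mul_left (by omega) _
      have h2 : f i * G i ≤ ∑ j ∈ range (q+1), f j * G j :=
        Finset.single_le_sum (f := fun j => f j * G j) (fun _ _ => Nat.zero_le _) himem
      have h3 := hGige i
      linarith [hf]
    rcases Nat.eq_zero_or_pos (f i) with hfi0 | hfi1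
    · -- f i = 0 : contradiction
      exfalso
      have hred : ∑ j ∈ range i, f j * G j = G i := by
        have hsub : range i ⊆ range (q+1) := by
          intro j hj
          exact mem_range.mpr (by have := mem_range.mp hj; omega)
        have hvan : ∀ j ∈ range (q+1), j ∉ range i → f j * G j = 0 := by
          intro j hj hj2
          have hji : i ≤ j := by
            by_contra h
            exact hj2 (mem_range.mpr (by omega))
          rcases Nat.eq_or_lt_of_le hji with rfl | hlt
          · simp [hfi0]
          · simp [hzero j hj hlt]
        rw [Finset.sum_subset hsub hvan]
        exact hf
      rcases Nat.eq_zero_or_pos i with rfl | hipos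
      · rw [Finset.range_zero, Finset.sum_empty] at hred
        have := hGige 0
        omega
      obtain ⟨ν, hν⟩ : ∃ ν, n = ν + 1 := ⟨n - 1, by omega⟩
      have hdec : ∀ j, G j = fib ν * fib (j*(c+1)) + fib (ν+1) * fib (j*(c+1)+1) := by
        intro j
        show fib (n + j*(c+1)) = _
        rw [hν, show ν + 1 + j*(c+1) = ν + j*(c+1) + 1 from by ring, Nat.fib_add]
      set P := ∑ j ∈ range i, f j * fib (j*(c+1)) with hP
      set Q := ∑ j ∈ range i, f j * fib (j*(c+1)+1) with hQ
      have heq : fib ν * P + fib (ν+1) * Q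
          = fib ν * fib (i*(c+1)) + fib (ν+1) * fib (i*(c+1)+1) := by
        have hL : ∑ j ∈ range i, f j * G j = fib ν * P + fib (ν+1) * Q := by
          rw [hP, hQ, Finset.mul_sum, Finset.mul_sum, ← Finset.sum_add_distrib]
          apply Finset.sum_congr rfl
          intro j _
          rw [hdec j]
          ring
        rw [← hL, hred, hdec i]
      have hcopν : IsCoprime ((fib (ν+1) : ℤ)) ((fib ν : ℤ)) := by
        rw [Nat.isCoprime_iff_coprime]
        exact (fib_coprime_fib_succ ν).symm
      have hmulZ : (fib ν : ℤ) * ((fib (i*(c+1)) : ℤ) - P)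
          = (fib (ν+1) : ℤ) * ((Q : ℤ) - fib (i*(c+1)+1)) := by
        have := heq
        zify at this
        linarith
      have hdvd : ((fib (ν+1) : ℤ)) ∣ ((fib (i*(c+1)) : ℤ) - P) :=
        hcopν.dvd_of_dvd_mul_left ⟨(Q : ℤ) - fib (i*(c+1)+1), hmulZ⟩
      obtain ⟨k, hk⟩ := hdvd
      have hνpos : (0:ℤ) < fib (ν+1) := by
        exact_mod_cast Nat.fib_pos.mpr (by omega)
      have hνge0 : (0:ℤ) ≤ fib ν := by positivity
      have hQk : (Q : ℤ) - fib (i*(c+1)+1) = fib ν * k := by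
        have h2 : (fib (ν+1) : ℤ) * (fib ν * k) = (fib (ν+1)) * ((Q:ℤ) - fib (i*(c+1)+1)) := by
          rw [← hmulZ, hk]
          ring
        have := mul_left_cancel₀ (ne_of_gt hνpos) h2
        linarith [this]
      rcases le_or_gt k 0 with hk0 | hk1
      · -- k ≤ 0
        have h6 : (fib (ν+1):ℤ) * k ≤ 0 := mul_nonpos_iff.mpr (Or.inl ⟨hνpos.le, hk0⟩)
        have h7 : (fib ν:ℤ) * k ≤ 0 := mul_nonpos_iff.mpr (Or.inl ⟨hνge0, hk0⟩)
        have hPge' : fib (i*(c+1)) ≤ P := by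
          have : (fib (i*(c+1)) : ℤ) ≤ (P:ℤ) := by linarith [hk]
          exact_mod_cast this
        have hQle' : Q ≤ fib (i*(c+1)+1) := by
          have : (Q:ℤ) ≤ (fib (i*(c+1)+1) : ℤ) := by linarith [hQk]
          exact_mod_cast this
        obtain ⟨ii, rfl⟩ : ∃ ii, i = ii + 1 := ⟨i - 1, by omega⟩
        rcases Nat.eq_zero_or_pos ii with rfl | hii
        · -- i = 1 : P = 0
          have hP0 : P = 0 := by
            rw [hP]
            simp
          have hfib : 0 < fib ((0+1)*(c+1)) := Nat.fib_pos.mpr (by omega)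
          omega
        obtain ⟨t, rfl⟩ : ∃ t, ii = t + 1 := ⟨ii - 1, by omega⟩
        set M := (t+1)*(c+1) with hM
        have hMpos : 2 ≤ M := by
          have : 1*2 ≤ (t+1)*(c+1) := Nat.mul_le_mul (by omega) (by omega)
          omega
        have hslope : ∀ j ∈ range (t+2),
            f j * fib (j*(c+1)) * fib (M+1) ≤ f j * fib (j*(c+1)+1) * fib M := by
          intro j hj
          rcases Nat.eq_zero_or_pos j with rfl | hjpos
          · simp
          have hjle : j ≤ t + 1 := by have := mem_range.mp hj; omega
          obtain ⟨c', hc'⟩ : ∃ c', j*(c+1) = c' + 1 := by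
            refine ⟨j*(c+1) - 1, ?_⟩
            have : 1*1 ≤ j*(c+1) := Nat.mul_le_mul hjpos (by omega)
            omega
          have hoddc' : Odd c' := by
            have hev : Even (j*(c+1)) := (hc.add_one).mul_left j
            rw [hc'] at hev
            rcases Nat.even_or_odd c' with h | h
            · exfalso
              exact (Nat.even_add_one.mp hev) h
            · exact h
          have hkey := vajdaN c' ((t+1-j)*(c+1)) 0 hoddc'
          have e1 : (t+1-j)*(c+1) + c' + 1 = M := by
            have h8 : (t+1-j)*(c+1) + j*(c+1) = (t+1)*(c+1) := by
              rw [← Nat.add_mul]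
              congr 1
              omega
            omega
          have e2 : 0 + c' + 2 = j*(c+1) + 1 := by omega
          have e3 : (t+1-j)*(c+1) + 0 + c' + 2 = M + 1 := by
            have h8 : (t+1-j)*(c+1) + j*(c+1) = (t+1)*(c+1) := by
              rw [← Nat.add_mul]
              congr 1
              omega
            omega
          rw [e1, e2, e3, hc'] at hkey
          rw [← hc'] at hkey
          -- hkey : fib M * fib (j*(c+1)+1) = fib (j*(c+1)) * fib (M+1) + fib ((t+1-j)*(c+1)) * fib 1
          have hb : fib (j*(c+1)) * fib (M+1) ≤ fib (j*(c+1)+1) * fib M := by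
            rw [mul_comm (fib (j*(c+1)+1))]
            exact Nat.le.intro hkey.symm
          rw [mul_assoc, mul_assoc]
          exact mul_le_mul_right hb _
        have hPQ : P * fib (M+1) ≤ Q * fib M := by
          rw [hP, hQ, Finset.sum_mul, Finset.sum_mul]
          exact Finset.sum_le_sum hslope
        have hkeyid : fib ((t+2)*(c+1)) * fib (M+1)
            = fib M * fib ((t+2)*(c+1)+1) + fib (c+1) := by
          obtain ⟨c'', hc''⟩ : ∃ c'', M = c'' + 1 := ⟨M - 1, by omega⟩
          have hoddc'' : Odd c'' := by
            have hev : Even M := (hc.add_one).mul_left (t+1)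
            rw [hc''] at hev
            rcases Nat.even_or_odd c'' with h | h
            · exact absurd h (Nat.even_add_one.mp hev)
            · exact h
          have hkey2 := vajdaN c'' (c+1) 0 hoddc''
          have e1 : (c+1) + c'' + 1 = (t+2)*(c+1) := by
            have : (t+2)*(c+1) = (t+1)*(c+1) + (c+1) := by ring
            omega
          have e2 : 0 + c'' + 2 = M + 1 := by omega
          have e3 : (c+1) + 0 + c'' + 2 = (t+2)*(c+1) + 1 := by
            have : (t+2)*(c+1) = (t+1)*(c+1) + (c+1) := by ring
            omega
          rw [e1, e2, e3, ← hc''] at hkey2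
          simpa using hkey2
        have cc1 : fib ((t+2)*(c+1)) * fib (M+1) ≤ P * fib (M+1) :=
          mul_le_mul_left hPge' _
        have cc2 : Q * fib M ≤ fib ((t+2)*(c+1)+1) * fib M :=
          mul_le_mul_left hQle' _
        have hfcpos : 0 < fib (c+1) := Nat.fib_pos.mpr (by omega)
        have hcomm : fib ((t+2)*(c+1)+1) * fib M = fib M * fib ((t+2)*(c+1)+1) := mul_comm _ _
        linarith [hkeyid, cc1, hPQ, cc2, hcomm, hfcpos]
      · -- k ≥ 1
        have hfdP : (fib (c+1) : ℤ) ∣ (P : ℤ) := by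
          rw [hP]
          push_cast
          apply Finset.dvd_sum
          intro j hj
          have hdj : fib (c+1) ∣ fib (j*(c+1)) := fib_dvd _ _ ⟨j, by ring⟩
          exact Dvd.dvd.mul_left (Int.natCast_dvd_natCast.mpr hdj) _
        have hfdI : (fib (c+1) : ℤ) ∣ (fib (i*(c+1)) : ℤ) :=
          Int.natCast_dvd_natCast.mpr (fib_dvd _ _ ⟨i, by ring⟩)
        have hdvdk : (fib (c+1) : ℤ) ∣ (fib (ν+1):ℤ) * k := by
          rw [← hk]
          exact dvd_sub hfdI hfdP
        have hcopdn : IsCoprime ((fib (c+1)):ℤ) ((fib (ν+1)):ℤ) := by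
          rw [Nat.isCoprime_iff_coprime]
          have h9 : Nat.Coprime (fib n) (fib (c+1)) := hcop
          rw [hν] at h9
          exact h9.symm
        have hdk : (fib (c+1):ℤ) ∣ k := hcopdn.dvd_of_dvd_mul_left hdvdk
        have hkge : (fib (c+1):ℤ) ≤ k := Int.le_of_dvd hk1 hdk
        have hPge0 : (0:ℤ) ≤ P := by positivity
        have h5 : (fib (ν+1):ℤ) * fib (c+1) ≤ fib (ν+1) * k :=
          mul_le_mul_of_nonneg_left hkge (le_of_lt hνpos)
        have hgeZ : (fib (ν+1):ℤ) * fib (c+1) ≤ (fib (i*(c+1)):ℤ) := by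
          linarith [hk]
        have hge : fib n * fib (c+1) ≤ fib (i*(c+1)) := by
          rw [hν]
          exact_mod_cast hgeZ
        have hle : fib (i*(c+1)) ≤ fib (q*(c+1)) := fib_mono (Nat.mul_le_mul_right _ hi)
        omega
    · -- f i = 1 : conclude sum = 1
      have hfi' : f i = 1 := by omega
      have hsplitm : f i * G i + ∑ j ∈ (range (q+1)).erase i, f j * G j
          = ∑ j ∈ range (q+1), f j * G j :=
        Finset.add_sum_erase (range (q+1)) (fun j => f j * G j) himem
      have hone : f i * G i = G i := by rw [hfi', one_mul]
      have hrest : ∑ j ∈ (range (q+1)).erase i, f j * G j = 0 := by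
        linarith [hsplitm, hf, hone]
      have hzrest : ∀ j ∈ (range (q+1)).erase i, f j = 0 := by
        intro j hj
        have h0 := (Finset.sum_eq_zero_iff.mp hrest) j hj
        have h1 := hGige j
        rcases Nat.mul_eq_zero.mp h0 with h | h
        · exact h
        · omega
      have hsf : f i + ∑ j ∈ (range (q+1)).erase i, f j = ∑ j ∈ range (q+1), f j :=
        Finset.add_sum_erase (range (q+1)) f himem
      rw [← hsf, hfi', Finset.sum_eq_zero hzrest]
      rfl
  -- minGenSet S = A
  have hset : minGenSet S = A := by
    apply Set.eq_of_subset_of_subset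
    · rintro m ⟨hmS, hm0, hmin⟩
      obtain ⟨f, hf⟩ := hrepr m hmS
      obtain ⟨j₀, hj₀mem, hj₀⟩ : ∃ j₀ ∈ range (q+1), 0 < f j₀ := by
        by_contra h
        push_neg at h
        apply hm0
        rw [hf]
        apply Finset.sum_eq_zero
        intro j hj
        have h0 : f j = 0 := by have := h j hj; omega
        simp [h0]
      have hsplitf : f j₀ + ∑ j ∈ (range (q+1)).erase j₀, f j = ∑ j ∈ range (q+1), f j :=
        Finset.add_sum_erase (range (q+1)) f hj₀mem
      have hsplitm : f j₀ * G j₀ + ∑ j ∈ (range (q+1)).erase j₀, f j * G j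
          = ∑ j ∈ range (q+1), f j * G j :=
        Finset.add_sum_erase (range (q+1)) (fun j => f j * G j) hj₀mem
      rcases Nat.lt_or_ge (∑ j ∈ range (q+1), f j) 2 with hs2 | hs2
      · -- total = 1 : m = G j₀
        have hfj₀ : f j₀ = 1 := by omega
        have hrest : ∑ j ∈ (range (q+1)).erase j₀, f j = 0 := by omega
        have hz : ∀ j ∈ (range (q+1)).erase j₀, f j * G j = 0 := by
          intro j hj
          have := (Finset.sum_eq_zero_iff.mp hrest) j hj
          simp [this]
        have hGm : m = G j₀ := by
          rw [hf, ← hsplitm, hfj₀, Finset.sum_eq_zero hz, one_mul, add_zero]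
        exact ⟨j₀, Set.mem_Iic.mpr (by have := mem_range.mp hj₀mem; omega), hGm.symm⟩
      · -- total ≥ 2 : contradiction with minimality
        exfalso
        set y := (f j₀ - 1) * G j₀ + ∑ j ∈ (range (q+1)).erase j₀, f j * G j with hy
        have hyS : y ∈ S := by
          apply add_mem
          · exact hmulmem S _ _ (subset_closure ⟨j₀, rfl⟩)
          · exact sum_mem fun j _ => hmulmem S _ _ (subset_closure ⟨j, rfl⟩)
        have hmy : m = G j₀ + y := by
          have hfj : f j₀ * G j₀ = G j₀ + (f j₀ - 1) * G j₀ := by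
            obtain ⟨t, ht⟩ : ∃ t, f j₀ = t + 1 := ⟨f j₀ - 1, by omega⟩
            rw [ht, Nat.add_sub_cancel]
            ring
          rw [hf, ← hsplitm, hfj, hy]
          ring
        have hy0 : y ≠ 0 := by
          intro h0
          have hmG : m = G j₀ := by omega
          have hone := claimM j₀ (by have := mem_range.mp hj₀mem; omega) f (by rw [← hf, hmG])
          omega
        exact hmin (G j₀) y (subset_closure ⟨j₀, rfl⟩) hyS
          (by have := hGige j₀; omega) hy0 hmy
    · rintro m ⟨i, hi, rfl⟩
      have hiq : i ≤ q := Set.mem_Iic.mp hi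
      refine ⟨subset_closure ⟨i, rfl⟩, by have := hGige i; omega, ?_⟩
      intro a b haS hbS ha0 hb0 heq
      obtain ⟨fa, hfa⟩ := hrepr a haS
      obtain ⟨fb, hfb⟩ := hrepr b hbS
      have hsum : (∑ j ∈ range (q+1), (fa j + fb j) * G j) = G i := by
        have : ∑ j ∈ range (q+1), (fa j + fb j) * G j
            = (∑ j ∈ range (q+1), fa j * G j) + ∑ j ∈ range (q+1), fb j * G j := by
          rw [← Finset.sum_add_distrib]
          exact Finset.sum_congr rfl fun j _ => by ring
        rw [this, ← hfa, ← hfb, ← heq]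
      have h1 := claimM i hiq (fun j => fa j + fb j) hsum
      rw [Finset.sum_add_distrib] at h1
      have : (∑ j ∈ range (q+1), fa j) = 0 ∨ (∑ j ∈ range (q+1), fb j) = 0 := by omega
      rcases this with h | h
      · apply ha0
        rw [hfa]
        apply Finset.sum_eq_zero
        intro j hj
        have h0 := (Finset.sum_eq_zero_iff.mp h) j hj
        simp [h0]
      · apply hb0
        rw [hfb]
        apply Finset.sum_eq_zero
        intro j hj
        have h0 := (Finset.sum_eq_zero_iff.mp h) j hj
        simp [h0]
  rw [hset, hA]
  rw [Set.ncard_image_of_injOn]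
  · rw [show Set.Iic q = ↑(Finset.Iic q) by simp]
    rw [Set.ncard_coe_finset]
    simp
  · intro i _ j _ hij
    by_contra hne
    rcases Nat.lt_or_ge i j with h | h
    · exact absurd hij (Nat.ne_of_lt (hGmono i j h))
    · exact absurd hij.symm (Nat.ne_of_lt (hGmono j i (by omega)))


lemma trivial_case (S : AddSubmonoid ℕ) (h1 : (1:ℕ) ∈ S) : (minGenSet S).ncard = 1 := by
  have hall : ∀ x : ℕ, x ∈ S := by
    intro x
    have := AddSubmonoid.nsmul_mem S h1 x
    simpa using this
  have hset : minGenSet S = {1} := by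
    apply Set.eq_of_subset_of_subset
    · rintro m ⟨_, hm0, hmin⟩
      rcases Nat.lt_or_ge m 2 with h | h
      · interval_cases m
        · omega
        · rfl
      · exfalso
        exact hmin 1 (m-1) (hall 1) (hall (m-1)) (by omega) (by omega) (by omega)
    · rintro m rfl
      exact ⟨h1, by omega, fun a b _ _ ha hb hab => by omega⟩
  rw [hset]
  exact Set.ncard_singleton 1

theorem embedding_dimension_fib_subsequence
    (d n : ℕ) (hd : 0 < d) (hde : Even d) (hn : 1 ≤ n)
    (hgcd : Nat.gcd (Nat.fib n) (Nat.fib d) = 1)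
    (S₁ : AddSubmonoid ℕ)
    (hS : S₁ = AddSubmonoid.closure {m | ∃ k : ℕ, m = Nat.fib (n + k * d)}) :
    ((d = 2 ∨ (2 < d ∧ n ≤ 2)) → (minGenSet S₁).ncard = 1 + (n - 2) ⌈/⌉ d) ∧
    ((2 < d ∧ 2 < n) → (minGenSet S₁).ncard = 1 + (n - 1) ⌈/⌉ d) := by
  subst hS
  rcases Nat.lt_or_ge n 3 with hn3 | hn3
  · -- trivial case : fib n = 1
    have hfn : fib n = 1 := by interval_cases n <;> rfl
    have h1 : (1:ℕ) ∈ AddSubmonoid.closure {m | ∃ k : ℕ, m = Nat.fib (n + k * d)} := by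
      apply AddSubmonoid.subset_closure
      exact ⟨0, by simp [hfn]⟩
    have hcard := trivial_case _ h1
    constructor
    · intro _
      rw [hcard, show n - 2 = 0 by omega]
      simp
    · intro ⟨_, hn2⟩
      omega
  · -- main case
    obtain ⟨c, rfl⟩ : ∃ c, d = c + 1 := ⟨d - 1, by omega⟩
    have hcodd : Odd c := by simpa using Nat.Even.sub_odd (by omega) hde odd_one
    constructor
    · rintro (hd2 | ⟨_, hn2⟩)
      · -- d = 2, n ≥ 3
        have hc1 : c = 1 := by omega
        subst hc1
        set q := (n-1)/2 with hqdef
        have hq1 : 1 ≤ q := by omega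
        have hqd : q*(1+1) = n - 2 ∨ q*(1+1) = n - 1 := by omega
        have := core 1 n q (by decide) hn3 hq1 (by simpa using hgcd)
          (by rcases hqd with h | h
              · exact Or.inl ⟨h, rfl⟩
              · exact Or.inr (Or.inl h))
        rw [this]
        rw [Nat.ceilDiv_eq_add_pred_div]
        omega
      · omega
    · rintro ⟨hd2, hn2⟩
      set q := (n + c - 1)/(c+1) with hqdef
      have hmod := Nat.div_add_mod (n + c - 1) (c+1)
      rw [← hqdef] at hmod
      have hlt := Nat.mod_lt (n + c - 1) (y := c+1) (by omega)
      have hcomm : (c+1) * q = q * (c+1) := Nat.mul_comm _ _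
      have hq1 : q*(c+1) ≤ n + c - 1 := by omega
      have hq2 : n - 2 ≤ q*(c+1) := by omega
      have hq0 : 1 ≤ q := by
        rcases Nat.eq_zero_or_pos q with h | h
        · exfalso
          have : q * (c+1) = 0 := by rw [h]; ring
          omega
        · exact h
      have hgle2 : Nat.gcd n (c+1) ≤ 2 := by
        by_contra hg
        push_neg at hg
        have h1 : fib (Nat.gcd n (c+1)) = 1 := by
          rw [Nat.fib_gcd]
          exact hgcd
        have h2 : 2 ≤ fib (Nat.gcd n (c+1)) := by
          calc 2 = fib 3 := rfl
          _ ≤ fib (Nat.gcd n (c+1)) := fib_mono (by omega)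
        omega
      have hqn : q*(c+1) ≠ n := by
        intro h
        have hdvd : (c+1) ∣ n := ⟨q, by omega⟩
        have hg : Nat.gcd n (c+1) = c+1 := by
          rw [Nat.gcd_comm]
          exact Nat.gcd_eq_left hdvd
        omega
      have hqn1 : q*(c+1) ≠ n - 2 := by
        intro h
        omega
      have hcase : q*(c+1) = n - 1 ∨ (n + 1 ≤ q*(c+1) ∧ q*(c+1) + 2 ≤ n + c + 1) := by
        rcases Nat.lt_or_ge (q*(c+1)) n with h | h
        · left; omega
        · right
          exact ⟨by omega, by omega⟩
      have hcore := core c n q hcodd hn3 hq0 hgcd (Or.inr hcase)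
      rw [hcore]
      have hceil : (n-1) ⌈/⌉ (c+1) = q := by
        have hle1 : (n-1) ⌈/⌉ (c+1) ≤ q :=
          (ceilDiv_le_iff_le_mul (show 0 < c+1 by omega)).mpr (by omega)
        have hge := le_smul_ceilDiv (show 0 < c+1 by omega) (b := n-1)
        rw [smul_eq_mul] at hge
        have hle2 : q ≤ (n-1) ⌈/⌉ (c+1) := by
          by_contra hlt2
          push_neg at hlt2
          have h9 : (c+1) * ((n-1) ⌈/⌉ (c+1)) ≤ (c+1) * (q-1) :=
            Nat.mul_le_mul_left _ (by omega)
          have h10 : (c+1) * (q-1) + (c+1) = (c+1) * q := by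
            rw [← Nat.mul_succ]
            congr 1
            omega
          omega
        omega
      omega
end

section
/- Let d be even, gcd(L_n, F_d) = 1, and S₂ = ⟨L_n, L_{n+d}, L_{n+2d}, …⟩. Then the embedding dimension of S₂ is 1 if n = 1, and 1 + ⌈n/d⌉ if n > 1. -/
open Nat (fib)

lemma lucas_one' : lucas 1 = 1 := rfl

lemma lucas_add_two (m : ℕ) : lucas (m + 2) = lucas (m + 1) + lucas m := rfl

lemma lucas_pos (m : ℕ) : 0 < lucas m := by
  induction m using Nat.twoStepInduction with
  | zero => simp [lucas]
  | one => simp [lucas]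
  | more m ih1 ih2 => rw [lucas_add_two]; omega

lemma lucas_succ_eq_fib (b : ℕ) : lucas (b + 1) = fib b + fib (b + 2) := by
  induction b using Nat.twoStepInduction with
  | zero => simp [lucas]
  | one => decide
  | more b ih1 ih2 =>
    rw [show b + 2 + 1 = (b + 1) + 2 by ring, lucas_add_two, ih1, ih2,
      Nat.fib_add_two (n := b + 2), Nat.fib_add_two (n := b + 1), Nat.fib_add_two (n := b)]
    ring

lemma lucas_succ_lt (k : ℕ) : lucas (k + 1) < lucas (k + 2) := by
  rw [lucas_add_two]
  have := lucas_pos k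
  omega

lemma lucas_lt_lucas : ∀ {a b : ℕ}, 1 ≤ a → a < b → lucas a < lucas b := by
  intro a b ha hab
  induction b with
  | zero => omega
  | succ c ih =>
    have hc : 1 ≤ c := by omega
    obtain ⟨k, rfl⟩ : ∃ k, c = k + 1 := ⟨c - 1, by omega⟩
    have hstep : lucas (k + 1) < lucas (k + 1 + 1) := lucas_succ_lt k
    rcases Nat.lt_or_ge a (k + 1) with h | h
    · exact lt_trans (ih h) hstep
    · have : a = k + 1 := by omega
      subst this
      exact hstep

lemma lucas_le_lucas {a b : ℕ} (ha : 1 ≤ a) (hab : a ≤ b) : lucas a ≤ lucas b := by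
  rcases Nat.eq_or_lt_of_le hab with rfl | h
  · exact le_refl _
  · exact le_of_lt (lucas_lt_lucas ha h)

lemma coprime_lucas_succ (m : ℕ) : Nat.Coprime (lucas (m + 1)) (lucas m) := by
  induction m with
  | zero => simp [lucas, Nat.Coprime]
  | succ k ih =>
    rw [lucas_add_two]
    simpa [Nat.Coprime, Nat.coprime_add_self_left] using ih.symm

lemma lucas_add_fib (m p : ℕ) :
    lucas (m + 1 + p) = fib (p + 1) * lucas (m + 1) + fib p * lucas m := by
  induction p using Nat.twoStepInduction with
  | zero => simp
  | one =>
    rw [show m + 1 + 1 = m + 2 by ring, lucas_add_two]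
    simp [Nat.fib_one, Nat.fib_two]
  | more p ih1 ih2 =>
    rw [show m + 1 + (p + 2) = (m + 1 + p) + 2 by ring, lucas_add_two,
      show m + 1 + p + 1 = m + 1 + (p + 1) by ring, ih1, ih2,
      Nat.fib_add_two (n := p + 1), Nat.fib_add_two (n := p)]
    ring

/-- Key ℤ identity: fib a * lucas (a+b) + (-1)^a * fib b = fib (2a+b). -/
lemma fib_mul_lucas (a : ℕ) : ∀ b : ℕ,
    (fib a : ℤ) * lucas (a + b) + (-1) ^ a * fib b = fib (2 * a + b) := by
  induction a using Nat.twoStepInduction with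
  | zero => intro b; simp
  | one =>
    intro b
    have h := lucas_succ_eq_fib b
    rw [show 1 + b = b + 1 by ring, show 2 * 1 + b = b + 2 by ring, h]
    push_cast
    ring
  | more a ih1 ih2 =>
    intro b
    have h1 := ih2 (b + 1)  -- a+1 version
    have h2 := ih1 (b + 2)
    have e1 : a + 1 + (b + 1) = a + 2 + b := by ring
    have e2 : a + (b + 2) = a + 2 + b := by ring
    rw [e1] at h1
    rw [e2] at h2
    have hf : (fib (a + 2) : ℤ) = fib (a + 1) + fib a := by
      rw [Nat.fib_add_two]; push_cast; ring
    have hfb : (fib (b + 2) : ℤ) = fib b + fib (b + 1) := by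
      rw [Nat.fib_add_two]; push_cast; ring
    have htarget : (fib (2 * (a + 2) + b) : ℤ)
        = fib (2 * (a + 1) + (b + 1)) + fib (2 * a + (b + 2)) := by
      rw [show 2 * (a + 2) + b = (2 * a + b + 2) + 2 by ring, Nat.fib_add_two]
      push_cast [show 2 * (a + 1) + (b + 1) = 2 * a + b + 3 by ring,
        show 2 * a + (b + 2) = 2 * a + b + 2 by ring]
      ring
    rw [htarget, ← h1, ← h2, hf, hfb]
    ring

/-- Key ℤ identity: lucas a * lucas (a+b) = lucas (2a+b) + (-1)^a * lucas b. -/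
lemma lucas_mul_lucas (a : ℕ) : ∀ b : ℕ,
    (lucas a : ℤ) * lucas (a + b) = lucas (2 * a + b) + (-1) ^ a * lucas b := by
  induction a using Nat.twoStepInduction with
  | zero => intro b; simp [lucas]; ring
  | one =>
    intro b
    simp only [lucas, pow_one]
    rw [show 1 + b = b + 1 by ring, show 2 * 1 + b = b + 2 by ring, lucas_add_two]
    push_cast
    ring
  | more a ih1 ih2 =>
    intro b
    have h1 := ih2 (b + 1)
    have h2 := ih1 (b + 2)
    have e1 : a + 1 + (b + 1) = a + 2 + b := by ring
    have e2 : a + (b + 2) = a + 2 + b := by ring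
    rw [e1] at h1
    rw [e2] at h2
    have hf : (lucas (a + 2) : ℤ) = lucas (a + 1) + lucas a := by
      rw [lucas_add_two]; push_cast; ring
    have hfb : (lucas (b + 2) : ℤ) = lucas b + lucas (b + 1) := by
      rw [lucas_add_two]; push_cast; ring
    have htarget : (lucas (2 * (a + 2) + b) : ℤ)
        = lucas (2 * (a + 1) + (b + 1)) + lucas (2 * a + (b + 2)) := by
      rw [show 2 * (a + 2) + b = (2 * a + b + 2) + 2 by ring, lucas_add_two]
      push_cast [show 2 * (a + 1) + (b + 1) = 2 * a + b + 3 by ring,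
        show 2 * a + (b + 2) = 2 * a + b + 2 by ring]
      ring
    rw [hf]
    linear_combination h1 + h2 - htarget + (-1 : ℤ) ^ a * hfb

lemma fib_mul_lucas_even {a : ℕ} (ha : Even a) (b : ℕ) :
    fib a * lucas (a + b) + fib b = fib (2 * a + b) := by
  have h := fib_mul_lucas a b
  rw [ha.neg_one_pow, one_mul] at h
  exact_mod_cast h

lemma fib_lt_fib_add_two {b b' : ℕ} (hb : 1 ≤ b) (h : b + 2 ≤ b') : fib b < fib b' := by
  have h1 : fib b < fib (b + 2) := by
    rw [Nat.fib_add_two]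
    have : 0 < fib (b + 1) := Nat.fib_pos.mpr (by omega)
    omega
  exact lt_of_lt_of_le h1 (Nat.fib_mono h)

lemma arith_min (n d q : ℕ) (hn : 2 ≤ n) (hd : 2 ≤ d) (hde : Even d)
    (hgcd : Nat.gcd (lucas n) (fib d) = 1)
    (hq : q * d < n) (c : ℕ → ℕ)
    (hc : ∑ i ∈ Finset.range (q + 1), c i * lucas (n + i * d) = lucas (n + (q + 1) * d)) :
    False := by
  obtain ⟨ν, rfl⟩ : ∃ ν, n = ν + 1 := ⟨n - 1, by omega⟩
  have hν : 1 ≤ ν := by omega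
  set j := q + 1 with hj
  set A : ℕ := ∑ i ∈ Finset.range j, c i * fib (i * d + 1) with hA
  set B : ℕ := ∑ i ∈ Finset.range j, c i * fib (i * d) with hB
  -- the basic linear equation
  have hsum : ∑ i ∈ Finset.range j, c i * lucas (ν + 1 + i * d)
      = A * lucas (ν + 1) + B * lucas ν := by
    rw [hA, hB, Finset.sum_mul, Finset.sum_mul, ← Finset.sum_add_distrib]
    apply Finset.sum_congr rfl
    intro i _
    rw [lucas_add_fib]
    ring
  have hE : A * lucas (ν + 1) + B * lucas ν
      = fib (j * d + 1) * lucas (ν + 1) + fib (j * d) * lucas ν := by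
    rw [← hsum, ← lucas_add_fib ν (j * d)]
    exact hc
  have hLpos : 0 < lucas (ν + 1 + j * d) := lucas_pos _
  have hfjd_pos : 0 < fib (j * d) := Nat.fib_pos.mpr (Nat.mul_pos (by omega) (by omega))
  -- per-term inequality
  have hPT : ∀ i, 1 ≤ i → i < j →
      fib (i * d) * lucas (ν + 1 + j * d) < fib (j * d) * lucas (ν + 1 + i * d) := by
    intro i hi1 hij
    obtain ⟨w, hw⟩ : ∃ w, j = i + w := ⟨j - i, by omega⟩
    have hw1 : 1 ≤ w := by omega
    have hwd : w * d ≤ q * d := Nat.mul_le_mul_right d (by omega)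
    obtain ⟨b2, hb2⟩ : ∃ b2, ν + 1 = b2 + w * d := ⟨ν + 1 - w * d, by omega⟩
    have hb2pos : 1 ≤ b2 := by omega
    have hX1 : fib (i * d) * lucas (ν + 1 + j * d) + fib (ν + 1 + w * d)
        = fib (2 * (i * d) + (ν + 1 + w * d)) := by
      have := fib_mul_lucas_even (a := i * d) (hde.mul_left i) (ν + 1 + w * d)
      rw [show i * d + (ν + 1 + w * d) = ν + 1 + j * d by
        rw [hw, Nat.add_mul]; omega] at this
      exact this
    have hX2 : fib (j * d) * lucas (ν + 1 + i * d) + fib b2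
        = fib (2 * (j * d) + b2) := by
      have := fib_mul_lucas_even (a := j * d) (hde.mul_left j) b2
      rw [show j * d + b2 = ν + 1 + i * d by
        rw [hw, Nat.add_mul]; omega] at this
      exact this
    have hidx : 2 * (i * d) + (ν + 1 + w * d) = 2 * (j * d) + b2 := by
      rw [hw, Nat.add_mul]; omega
    have hflt : fib b2 < fib (ν + 1 + w * d) := by
      apply fib_lt_fib_add_two hb2pos
      have : 1 ≤ w * d := Nat.mul_pos (by omega) (by omega)
      omega
    rw [hidx] at hX1
    omega
  -- B ≤ fib (j*d)
  have hle_terms : ∀ i ∈ Finset.range j,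
      c i * fib (i * d) * lucas (ν + 1 + j * d)
        ≤ c i * (fib (j * d) * lucas (ν + 1 + i * d)) := by
    intro i hi
    rcases Nat.eq_zero_or_pos i with rfl | hipos
    · simp
    · have := hPT i hipos (Finset.mem_range.mp hi)
      calc c i * fib (i * d) * lucas (ν + 1 + j * d)
          = c i * (fib (i * d) * lucas (ν + 1 + j * d)) := by ring
        _ ≤ c i * (fib (j * d) * lucas (ν + 1 + i * d)) :=
            Nat.mul_le_mul_left _ (le_of_lt this)
  have hBsum : B * lucas (ν + 1 + j * d) ≤ fib (j * d) * lucas (ν + 1 + j * d) := by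
    calc B * lucas (ν + 1 + j * d)
        = ∑ i ∈ Finset.range j, c i * fib (i * d) * lucas (ν + 1 + j * d) := by
          rw [hB, Finset.sum_mul]
      _ ≤ ∑ i ∈ Finset.range j, c i * (fib (j * d) * lucas (ν + 1 + i * d)) :=
          Finset.sum_le_sum hle_terms
      _ = fib (j * d) * ∑ i ∈ Finset.range j, c i * lucas (ν + 1 + i * d) := by
          rw [Finset.mul_sum]; apply Finset.sum_congr rfl; intro i _; ring
      _ = fib (j * d) * lucas (ν + 1 + j * d) := by rw [hc]
  have hBle : B ≤ fib (j * d) := Nat.le_of_mul_le_mul_right hBsum hLpos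
  have hBne : B ≠ fib (j * d) := by
    intro hBeq
    have hR : ∑ i ∈ Finset.range j, c i * (fib (j * d) * lucas (ν + 1 + i * d))
        = fib (j * d) * lucas (ν + 1 + j * d) := by
      rw [← hc, Finset.mul_sum]
      exact Finset.sum_congr rfl (fun i _ => by ring)
    have hLs : ∑ i ∈ Finset.range j, c i * fib (i * d) * lucas (ν + 1 + j * d)
        = B * lucas (ν + 1 + j * d) := by
      rw [hB, Finset.sum_mul]
    have hsums_eq : ∑ i ∈ Finset.range j, c i * fib (i * d) * lucas (ν + 1 + j * d)
        = ∑ i ∈ Finset.range j, c i * (fib (j * d) * lucas (ν + 1 + i * d)) := by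
      rw [hLs, hR, hBeq]
    have hall := (Finset.sum_eq_sum_iff_of_le hle_terms).mp hsums_eq
    have hzero : ∀ i ∈ Finset.range j, c i * lucas (ν + 1 + i * d) = 0 := by
      intro i hi
      have h := hall i hi
      rcases Nat.eq_zero_or_pos i with rfl | hipos
      · have hL0pos : 0 < lucas (ν + 1 + 0 * d) := lucas_pos _
        have hrhs : c 0 * (fib (j * d) * lucas (ν + 1 + 0 * d)) = 0 := by
          rw [← h]
          simp [Nat.fib_zero]
        have hc0 : c 0 = 0 := by
          rcases Nat.mul_eq_zero.mp hrhs with h' | h'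
          · exact h'
          · exfalso
            rcases Nat.mul_eq_zero.mp h' with h'' | h'' <;> omega
        simp [hc0]
      · have hlt := hPT i hipos (Finset.mem_range.mp hi)
        have : c i = 0 := by
          by_contra hne
          have h0 : 0 < c i := Nat.pos_of_ne_zero hne
          have hstep : c i * (fib (i * d) * lucas (ν + 1 + j * d))
              < c i * (fib (j * d) * lucas (ν + 1 + i * d)) :=
            Nat.mul_lt_mul_of_pos_left hlt h0
          have h' : c i * fib (i * d) * lucas (ν + 1 + j * d)
              = c i * (fib (i * d) * lucas (ν + 1 + j * d)) := by ring
          omega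
        simp [this]
    rw [Finset.sum_eq_zero hzero] at hc
    have := lucas_pos (ν + 1 + j * d)
    omega
  -- divisibility by lucas (ν+1)
  have hEz : (A : ℤ) * lucas (ν + 1) + B * lucas ν
      = fib (j * d + 1) * lucas (ν + 1) + fib (j * d) * lucas ν := by
    exact_mod_cast hE
  have hdvd_mul : (lucas (ν + 1) : ℤ) ∣ ((fib (j * d) : ℤ) - B) * lucas ν :=
    ⟨(A : ℤ) - fib (j * d + 1), by linear_combination -hEz⟩
  have hcop : IsCoprime ((lucas (ν + 1) : ℤ)) ((lucas ν : ℤ)) :=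
    Nat.isCoprime_iff_coprime.mpr (coprime_lucas_succ ν)
  have hdvdz : (lucas (ν + 1) : ℤ) ∣ ((fib (j * d) : ℤ) - B) :=
    hcop.dvd_of_dvd_mul_right hdvd_mul
  have hdvdn : lucas (ν + 1) ∣ fib (j * d) - B := by
    have hcast : ((fib (j * d) - B : ℕ) : ℤ) = (fib (j * d) : ℤ) - B := by
      rw [Nat.cast_sub hBle]
    have h2 := hdvdz
    rw [← hcast] at h2
    exact_mod_cast h2
  -- divisibility by fib d
  have hfdB : fib d ∣ B := by
    apply Finset.dvd_sum
    intro i _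
    exact Dvd.dvd.mul_left (Nat.fib_dvd d (i * d) (dvd_mul_left d i)) (c i)
  have hfdJ : fib d ∣ fib (j * d) := Nat.fib_dvd d (j * d) (dvd_mul_left d j)
  have hfdD : fib d ∣ fib (j * d) - B := Nat.dvd_sub hfdJ hfdB
  -- combine
  have hcopn : (Nat.Coprime (fib d) (lucas (ν + 1))) := Nat.Coprime.symm hgcd
  have hmul_dvd : fib d * lucas (ν + 1) ∣ fib (j * d) - B :=
    hcopn.mul_dvd_of_dvd_of_dvd hfdD hdvdn
  have hDpos : 0 < fib (j * d) - B := by omega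
  have hgeD : fib d * lucas (ν + 1) ≤ fib (j * d) - B := Nat.le_of_dvd hDpos hmul_dvd
  -- final size contradiction
  have hjd_le : j * d ≤ d + ν := by
    have : j * d = q * d + d := by rw [hj, Nat.add_mul]; ring
    omega
  have hfib_le : fib (j * d) ≤ fib (d + ν) := Nat.fib_mono hjd_le
  have hfinal : fib (d + ν) < fib d * lucas (ν + 1) := by
    obtain ⟨δ, rfl⟩ : ∃ δ, d = δ + 1 := ⟨d - 1, by omega⟩
    have hadd : fib (δ + 1 + ν) = fib δ * fib ν + fib (δ + 1) * fib (ν + 1) := by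
      rw [show δ + 1 + ν = δ + ν + 1 by ring, Nat.fib_add]
    rw [hadd, lucas_succ_eq_fib ν]
    have h1 : fib δ ≤ fib (δ + 1) := Nat.fib_mono (by omega)
    have h2 : 0 < fib ν := Nat.fib_pos.mpr hν
    have h3 : 0 < fib (δ + 1) := Nat.fib_pos.mpr (by omega)
    have h4 : fib (ν + 2) = fib ν + fib (ν + 1) := Nat.fib_add_two
    nlinarith [Nat.fib_mono (show ν ≤ ν + 1 by omega)]
  omega

lemma coprime_lucas_lucas_add (n d : ℕ) (hn : 2 ≤ n) (hd : 2 ≤ d)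
    (hgcd : Nat.gcd (lucas n) (fib d) = 1) :
    Nat.Coprime (lucas (n + d)) (lucas n) := by
  obtain ⟨ν, rfl⟩ : ∃ ν, n = ν + 1 := ⟨n - 1, by omega⟩
  rw [lucas_add_fib ν d]
  have h1 : (fib (d + 1) * lucas (ν + 1) + fib d * lucas ν).Coprime (lucas (ν + 1)) := by
    rw [Nat.add_comm, Nat.coprime_add_mul_right_left]
    exact Nat.Coprime.mul (Nat.Coprime.symm hgcd) ((coprime_lucas_succ ν).symm)
  exact h1

lemma mem_two_gens (n d : ℕ) (hn : 2 ≤ n) (hd : 2 ≤ d)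
    (hcop : Nat.Coprime (lucas (n + d)) (lucas n)) (k : ℕ) (hk : n + d ≤ k * d) :
    lucas (n + k * d) ∈ AddSubmonoid.closure ({lucas n, lucas (n + d)} : Set ℕ) := by
  haveI : NeZero (lucas n) := ⟨(lucas_pos n).ne'⟩
  set u : (ZMod (lucas n))ˣ := ZMod.unitOfCoprime (lucas (n + d)) hcop with hu_def
  set x : ZMod (lucas n) := (lucas (n + k * d) : ZMod (lucas n)) * ↑u⁻¹ with hx_def
  set c1 := x.val with hc1_def
  have hc1lt : c1 < lucas n := ZMod.val_lt x
  have hx : ((c1 : ℕ) : ZMod (lucas n)) = x := ZMod.natCast_rightInverse x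
  have hu : ((lucas (n + d) : ℕ) : ZMod (lucas n)) = (u : ZMod (lucas n)) :=
    (ZMod.coe_unitOfCoprime _ hcop).symm
  have hcast : ((c1 * lucas (n + d) : ℕ) : ZMod (lucas n))
      = ((lucas (n + k * d) : ℕ) : ZMod (lucas n)) := by
    push_cast
    rw [hx, hu, hx_def, mul_assoc, Units.inv_mul, mul_one]
  have hmod : c1 * lucas (n + d) ≡ lucas (n + k * d) [MOD lucas n] :=
    (ZMod.natCast_eq_natCast_iff _ _ _).mp hcast
  -- size bound
  have hLL : lucas n * lucas (n + d) ≤ lucas (2 * n + d) + lucas d := by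
    have hz := lucas_mul_lucas n d
    rcases Nat.even_or_odd n with he | ho
    · rw [he.neg_one_pow, one_mul] at hz
      exact le_of_eq (by exact_mod_cast hz)
    · rw [ho.neg_one_pow] at hz
      have hd0 : (0 : ℤ) ≤ lucas d := by positivity
      have : (lucas n : ℤ) * lucas (n + d) ≤ lucas (2 * n + d) + lucas d := by
        rw [hz]; linarith
      exact_mod_cast this
  have hda : lucas d < lucas (n + d) := lucas_lt_lucas (by omega) (by omega)
  have hmono : lucas (2 * n + d) ≤ lucas (n + k * d) := lucas_le_lucas (by omega) (by omega)
  have hstep : c1 * lucas (n + d) + lucas (n + d) ≤ lucas n * lucas (n + d) := by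
    have h1 : c1 + 1 ≤ lucas n := hc1lt
    calc c1 * lucas (n + d) + lucas (n + d) = (c1 + 1) * lucas (n + d) := by ring
      _ ≤ lucas n * lucas (n + d) := Nat.mul_le_mul_right _ h1
  have hsize : c1 * lucas (n + d) < lucas (n + k * d) := by omega
  have hdvd : lucas n ∣ lucas (n + k * d) - c1 * lucas (n + d) :=
    (Nat.modEq_iff_dvd' (le_of_lt hsize)).mp hmod
  obtain ⟨c0, hc0⟩ := hdvd
  have heq : lucas (n + k * d) = c0 * lucas n + c1 * lucas (n + d) := by
    have := lucas_pos (n + k * d)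
    rw [Nat.mul_comm (lucas n) c0] at hc0
    omega
  rw [heq]
  have h0 : lucas n ∈ AddSubmonoid.closure ({lucas n, lucas (n + d)} : Set ℕ) :=
    AddSubmonoid.subset_closure (by simp)
  have h1 : lucas (n + d) ∈ AddSubmonoid.closure ({lucas n, lucas (n + d)} : Set ℕ) :=
    AddSubmonoid.subset_closure (by simp)
  have hs0 := AddSubmonoid.nsmul_mem _ h0 c0
  have hs1 := AddSubmonoid.nsmul_mem _ h1 c1
  rw [smul_eq_mul] at hs0 hs1
  exact add_mem hs0 hs1

theorem embedding_dimension_lucas_subsequence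
    (d n : ℕ) (hd : 0 < d) (hde : Even d) (hn : 1 ≤ n)
    (hgcd : Nat.gcd (lucas n) (Nat.fib d) = 1)
    (S₂ : AddSubmonoid ℕ)
    (hS : S₂ = AddSubmonoid.closure {m | ∃ k : ℕ, m = lucas (n + k * d)}) :
    (n = 1 → (minGenSet S₂).ncard = 1) ∧
    (1 < n → (minGenSet S₂).ncard = 1 + n ⌈/⌉ d) := by
  subst hS
  constructor
  · -- n = 1 case
    rintro rfl
    have h1 : (1 : ℕ) ∈ AddSubmonoid.closure {m | ∃ k : ℕ, m = lucas (1 + k * d)} := by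
      apply AddSubmonoid.subset_closure
      exact ⟨0, by simp [lucas_one']⟩
    have htop : ∀ x : ℕ, x ∈ AddSubmonoid.closure {m | ∃ k : ℕ, m = lucas (1 + k * d)} := by
      intro x
      have := AddSubmonoid.nsmul_mem _ h1 x
      simpa using this
    have hst : minGenSet (AddSubmonoid.closure {m | ∃ k : ℕ, m = lucas (1 + k * d)})
        = {1} := by
      ext m
      simp only [minGenSet, Set.mem_setOf_eq, Set.mem_singleton_iff]
      constructor
      · rintro ⟨hm, hm0, hmin⟩
        by_contra hne
        exact hmin 1 (m - 1) (htop 1) (htop (m - 1)) one_ne_zero (by omega) (by omega)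
      · rintro rfl
        exact ⟨htop 1, one_ne_zero, fun a b _ _ ha hb => by omega⟩
    rw [hst]
    exact Set.ncard_singleton 1
  · -- n ≥ 2 case
    intro hn2
    have hd2 : 2 ≤ d := by
      obtain ⟨r, hr⟩ := hde
      omega
    set K := n ⌈/⌉ d with hKdef
    have hKdiv : K = (n + d - 1) / d := by rw [hKdef, Nat.ceilDiv_eq_add_pred_div]
    have hKd_ub : K * d ≤ n + d - 1 := by
      rw [hKdiv]
      exact Nat.div_mul_le_self _ _
    have hKd_lb : n ≤ K * d := by
      have hdm := Nat.div_add_mod (n + d - 1) d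
      have hmlt : (n + d - 1) % d < d := Nat.mod_lt _ (by omega)
      rw [hKdiv, Nat.mul_comm]
      omega
    have hK1 : 1 ≤ K := by
      by_contra h
      have : K = 0 := by omega
      rw [this] at hKd_lb
      omega
    have hcop := coprime_lucas_lucas_add n d hn2 hd2 hgcd
    -- the T submonoid
    set Gset : Set ℕ := (fun i => lucas (n + i * d)) '' Set.Iic K with hGset
    set T := AddSubmonoid.closure Gset with hT
    -- closure equality
    have hTeq : AddSubmonoid.closure {m | ∃ k : ℕ, m = lucas (n + k * d)} = T := by
      apply le_antisymm
      · rw [AddSubmonoid.closure_le]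
        rintro m ⟨k, rfl⟩
        rcases le_or_gt k K with hk | hk
        · exact AddSubmonoid.subset_closure ⟨k, hk, rfl⟩
        · have hkd : n + d ≤ k * d := by
            have h1 : (K + 1) * d ≤ k * d := Nat.mul_le_mul_right d hk
            rw [Nat.add_mul] at h1
            omega
          have hmem := mem_two_gens n d hn2 hd2 hcop k hkd
          refine AddSubmonoid.closure_mono ?_ hmem
          intro x hx
          simp only [Set.mem_insert_iff, Set.mem_singleton_iff] at hx
          rcases hx with rfl | rfl
          · exact ⟨0, by simp, by simp⟩
          · exact ⟨1, by simpa using hK1, by simp⟩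
      · rw [AddSubmonoid.closure_le]
        rintro x ⟨i, _, rfl⟩
        exact AddSubmonoid.subset_closure ⟨i, rfl⟩
    -- representation lemma
    have hrepr : ∀ x ∈ T, ∃ c : ℕ → ℕ,
        x = ∑ i ∈ Finset.Iic K, c i * lucas (n + i * d) := by
      intro x hx
      induction hx using AddSubmonoid.closure_induction with
      | mem y hy =>
        obtain ⟨i, hi, rfl⟩ := hy
        have hiK : i ∈ Finset.Iic K := Finset.mem_Iic.mpr (Set.mem_Iic.mp hi)
        refine ⟨fun i' => if i' = i then 1 else 0, ?_⟩
        have hcongr : ∀ i' ∈ Finset.Iic K,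
            (if i' = i then 1 else 0) * lucas (n + i' * d)
              = if i' = i then lucas (n + i' * d) else 0 := by
          intro i' _
          by_cases h : i' = i <;> simp [h]
        rw [Finset.sum_congr rfl hcongr,
          Finset.sum_ite_eq' (Finset.Iic K) i (fun i' => lucas (n + i' * d)), if_pos hiK]
      | zero => exact ⟨0, by simp⟩
      | add a b ha hb iha ihb =>
        obtain ⟨ca, hca⟩ := iha
        obtain ⟨cb, hcb⟩ := ihb
        refine ⟨fun i => ca i + cb i, ?_⟩
        rw [hca, hcb, ← Finset.sum_add_distrib]
        exact Finset.sum_congr rfl (fun i _ => by ring)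
    -- each generator is in T
    have hgen_mem : ∀ i ≤ K, lucas (n + i * d) ∈ T :=
      fun i hi => AddSubmonoid.subset_closure ⟨i, hi, rfl⟩
    -- lower bound for nonzero elements
    have hGE : ∀ x ∈ T, x ≠ 0 → lucas n ≤ x := by
      intro x hx hx0
      obtain ⟨c, rfl⟩ := hrepr x hx
      have hex : ∃ i ∈ Finset.Iic K, c i ≠ 0 := by
        by_contra hall
        push_neg at hall
        have : ∑ i ∈ Finset.Iic K, c i * lucas (n + i * d) = 0 :=
          Finset.sum_eq_zero (fun i hi => by rw [hall i hi, Nat.zero_mul])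
        exact hx0 this
      obtain ⟨i, hi, hci⟩ := hex
      have h1 : c i * lucas (n + i * d) ≤ ∑ i ∈ Finset.Iic K, c i * lucas (n + i * d) :=
        Finset.single_le_sum (f := fun i => c i * lucas (n + i * d))
          (fun _ _ => Nat.zero_le _) hi
      have h2 : lucas n ≤ lucas (n + i * d) := lucas_le_lucas (by omega) (by omega)
      have h3 : lucas (n + i * d) ≤ c i * lucas (n + i * d) :=
        Nat.le_mul_of_pos_left _ (Nat.pos_of_ne_zero hci)
      omega
    -- monotonicity of generators
    have hGle : ∀ i i' : ℕ, i ≤ i' → lucas (n + i * d) ≤ lucas (n + i' * d) := by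
      intro i i' h
      exact lucas_le_lucas (by omega) (by
        have := Nat.mul_le_mul_right d h
        omega)
    -- key minimality
    have hKEY : ∀ j ≤ K, ∀ a b : ℕ, a ∈ T → b ∈ T → a ≠ 0 → b ≠ 0 →
        lucas (n + j * d) ≠ a + b := by
      intro j hj a b ha hb ha0 hb0 heq
      obtain ⟨ca, hca⟩ := hrepr a ha
      obtain ⟨cb, hcb⟩ := hrepr b hb
      have hcsum : ∑ i ∈ Finset.Iic K, (ca i + cb i) * lucas (n + i * d)
          = lucas (n + j * d) := by
        rw [heq, hca, hcb, ← Finset.sum_add_distrib]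
        exact Finset.sum_congr rfl (fun i _ => by ring)
      by_cases hbig : ∃ i ∈ Finset.Iic K, j ≤ i ∧ (ca i + cb i) ≠ 0
      · obtain ⟨i0, hi0K, hji0, hci0⟩ := hbig
        have h1 : (ca i0 + cb i0) * lucas (n + i0 * d)
            ≤ ∑ i ∈ Finset.Iic K, (ca i + cb i) * lucas (n + i * d) :=
          Finset.single_le_sum (f := fun i => (ca i + cb i) * lucas (n + i * d))
            (fun _ _ => Nat.zero_le _) hi0K
        have h2 : lucas (n + j * d) ≤ lucas (n + i0 * d) := hGle j i0 hji0
        have h3 : lucas (n + i0 * d) ≤ (ca i0 + cb i0) * lucas (n + i0 * d) :=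
          Nat.le_mul_of_pos_left _ (Nat.pos_of_ne_zero hci0)
        -- sum of the rest is zero
        have hsplit : ∑ i ∈ (Finset.Iic K).erase i0, (ca i + cb i) * lucas (n + i * d)
            + (ca i0 + cb i0) * lucas (n + i0 * d)
            = ∑ i ∈ Finset.Iic K, (ca i + cb i) * lucas (n + i * d) :=
          Finset.sum_erase_add _ _ hi0K
        have hrest : ∑ i ∈ (Finset.Iic K).erase i0,
            (ca i + cb i) * lucas (n + i * d) = 0 := by omega
        have hi0eq : (ca i0 + cb i0) * lucas (n + i0 * d) = lucas (n + j * d) := by omega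
        have hzero : ∀ i ∈ (Finset.Iic K).erase i0, (ca i + cb i) * lucas (n + i * d) = 0 :=
          Finset.sum_eq_zero_iff.mp hrest
        -- a = ca i0 * G i0
        have haeq : a = ca i0 * lucas (n + i0 * d) := by
          have hs : ∑ i ∈ (Finset.Iic K).erase i0, ca i * lucas (n + i * d)
              + ca i0 * lucas (n + i0 * d)
              = ∑ i ∈ Finset.Iic K, ca i * lucas (n + i * d) :=
            Finset.sum_erase_add _ _ hi0K
          have hz : ∑ i ∈ (Finset.Iic K).erase i0, ca i * lucas (n + i * d) = 0 := by
            apply Finset.sum_eq_zero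
            intro i hi
            have h0 := hzero i hi
            have : ca i + cb i = 0 := by
              rcases Nat.mul_eq_zero.mp h0 with h' | h'
              · exact h'
              · exact absurd h' (lucas_pos _).ne'
            have : ca i = 0 := by omega
            rw [this, Nat.zero_mul]
          omega
        have hbeq : b = cb i0 * lucas (n + i0 * d) := by
          have hs : ∑ i ∈ (Finset.Iic K).erase i0, cb i * lucas (n + i * d)
              + cb i0 * lucas (n + i0 * d)
              = ∑ i ∈ Finset.Iic K, cb i * lucas (n + i * d) :=
            Finset.sum_erase_add _ _ hi0K
          have hz : ∑ i ∈ (Finset.Iic K).erase i0, cb i * lucas (n + i * d) = 0 := by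
            apply Finset.sum_eq_zero
            intro i hi
            have h0 := hzero i hi
            have : ca i + cb i = 0 := by
              rcases Nat.mul_eq_zero.mp h0 with h' | h'
              · exact h'
              · exact absurd h' (lucas_pos _).ne'
            have : cb i = 0 := by omega
            rw [this, Nat.zero_mul]
          omega
        have hca0 : 1 ≤ ca i0 := by
          by_contra h
          have : ca i0 = 0 := by omega
          rw [this, Nat.zero_mul] at haeq
          exact ha0 haeq
        have hcb0 : 1 ≤ cb i0 := by
          by_contra h
          have : cb i0 = 0 := by omega
          rw [this, Nat.zero_mul] at hbeq
          exact hb0 hbeq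
        have h4 : 2 * lucas (n + i0 * d) ≤ (ca i0 + cb i0) * lucas (n + i0 * d) :=
          Nat.mul_le_mul_right _ (by omega)
        have h5 := lucas_pos (n + i0 * d)
        omega
      · push_neg at hbig
        have hsub : Finset.range j ⊆ Finset.Iic K := by
          intro i hi
          rw [Finset.mem_range] at hi
          rw [Finset.mem_Iic]
          omega
        have hsum2 : ∑ i ∈ Finset.range j, (ca i + cb i) * lucas (n + i * d)
            = lucas (n + j * d) := by
          rw [← hcsum]
          apply Finset.sum_subset hsub
          intro i hiK hnot
          rw [Finset.mem_range] at hnot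
          rw [hbig i hiK (by omega), Nat.zero_mul]
        rcases Nat.eq_zero_or_pos j with rfl | hj1
        · rw [Finset.range_zero, Finset.sum_empty] at hsum2
          exact absurd hsum2.symm (lucas_pos _).ne'
        · obtain ⟨q, rfl⟩ : ∃ q, j = q + 1 := ⟨j - 1, by omega⟩
          have hqd : q * d < n := by
            have h1 : (q + 1) * d ≤ K * d := Nat.mul_le_mul_right d hj
            rw [Nat.add_mul] at h1
            omega
          exact arith_min n d q hn2 hd2 hde hgcd hqd (fun i => ca i + cb i) hsum2
    -- the minimal generating set
    have hset : minGenSet T = (fun i => lucas (n + i * d)) '' Set.Iic K := by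
      ext m
      constructor
      · rintro ⟨hm, hm0, hmin⟩
        obtain ⟨c, rfl⟩ := hrepr m hm
        have hex : ∃ i ∈ Finset.Iic K, c i ≠ 0 := by
          by_contra hall
          push_neg at hall
          exact hm0 (Finset.sum_eq_zero (fun i hi => by rw [hall i hi, Nat.zero_mul]))
        obtain ⟨i0, hi0, hci0⟩ := hex
        set r := (c i0 - 1) * lucas (n + i0 * d)
          + ∑ i ∈ (Finset.Iic K).erase i0, c i * lucas (n + i * d) with hrdef
        have hsplit : ∑ i ∈ (Finset.Iic K).erase i0, c i * lucas (n + i * d)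
            + c i0 * lucas (n + i0 * d)
            = ∑ i ∈ Finset.Iic K, c i * lucas (n + i * d) :=
          Finset.sum_erase_add _ _ hi0
        have hmul : c i0 * lucas (n + i0 * d)
            = lucas (n + i0 * d) + (c i0 - 1) * lucas (n + i0 * d) := by
          obtain ⟨c', hc'⟩ : ∃ c', c i0 = c' + 1 := ⟨c i0 - 1, by omega⟩
          rw [hc']
          have : c' + 1 - 1 = c' := by omega
          rw [this, Nat.add_mul, Nat.one_mul]
          ring
        have hm_eq : ∑ i ∈ Finset.Iic K, c i * lucas (n + i * d)
            = lucas (n + i0 * d) + r := by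
          rw [hrdef]
          omega
        have hrT : r ∈ T := by
          apply add_mem
          · have := AddSubmonoid.nsmul_mem _ (hgen_mem i0 (Finset.mem_Iic.mp hi0)) (c i0 - 1)
            rwa [smul_eq_mul] at this
          · apply AddSubmonoid.sum_mem
            intro i hi
            have hiK : i ≤ K := Finset.mem_Iic.mp (Finset.mem_of_mem_erase hi)
            have := AddSubmonoid.nsmul_mem _ (hgen_mem i hiK) (c i)
            rwa [smul_eq_mul] at this
        rcases eq_or_ne r 0 with hr0 | hr0
        · refine ⟨i0, Finset.mem_Iic.mp hi0, ?_⟩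
          rw [hm_eq, hr0, Nat.add_zero]
        · exact absurd hm_eq (hmin (lucas (n + i0 * d)) r
            (hgen_mem i0 (Finset.mem_Iic.mp hi0)) hrT (lucas_pos _).ne' hr0)
      · rintro ⟨j, hj, rfl⟩
        refine ⟨hgen_mem j hj, (lucas_pos _).ne', ?_⟩
        intro a b ha hb ha0 hb0
        exact hKEY j hj a b ha hb ha0 hb0
    -- count
    rw [hTeq, hset]
    have himg : (fun i => lucas (n + i * d)) '' Set.Iic K
        = ↑((Finset.Iic K).image (fun i => lucas (n + i * d))) := by
      rw [Finset.coe_image, Finset.coe_Iic]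
    rw [himg, Set.ncard_coe_finset]
    rw [Finset.card_image_of_injOn, Nat.card_Iic]
    · omega
    · intro i _ i' _ hii'
      have hii2 : lucas (n + i * d) = lucas (n + i' * d) := hii'
      by_contra hne
      rcases Nat.lt_or_ge i i' with h | h
      · have : lucas (n + i * d) < lucas (n + i' * d) := by
          apply lucas_lt_lucas (by omega)
          have := Nat.mul_lt_mul_of_pos_right h (show 0 < d by omega)
          omega
        omega
      · have hlt : i' < i := by omega
        have : lucas (n + i' * d) < lucas (n + i * d) := by
          apply lucas_lt_lucas (by omega)
          have := Nat.mul_lt_mul_of_pos_right hlt (show 0 < d by omega)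
          omega
        omega
end

section
/- Let d be even and k > 1, and apply the greedy algorithm to represent C = F_{(k+1)d}/F_d in terms of 1, F_{2d}/F_d, …, F_{kd}/F_d (at each step taking the largest possible multiple of the largest remaining term). Then the resulting coefficients λ_1, …, λ_k satisfy λ_1 = λ_k = L_d − 1 and λ_i = L_d − 2 for 2 ≤ i ≤ k − 1. -/
/-- the `i`-th greedy weight `F_{id}/F_d`. -/
def gw (d i : ℕ) : ℕ := Nat.fib (i * d) / Nat.fib d

/-- `gRem d k x m` is the remaining value after the greedy algorithm for `x`,
with respect to the weights `gw d 1, …, gw d k`, has processed the top `m`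
indices `k, k-1, …, k-m+1`. -/
def gRem (d k x : ℕ) : ℕ → ℕ
  | 0 => x
  | m + 1 => gRem d k x m % gw d (k - m)

/-- the `i`-th greedy coefficient `λ_i` of `x` w.r.t. `gw d 1, …, gw d k`:
`λ_i = ⌊(x − ∑_{j>i} λ_j · gw d j) / gw d i⌋`. -/
def gLam (d k x i : ℕ) : ℕ := gRem d k x (k - i) / gw d i

lemma lucas_pos_s13 : ∀ n, 1 ≤ lucas n := by
  intro n
  induction n using Nat.twoStepInduction with
  | zero => simp [lucas]
  | one => simp [lucas]
  | more n ih1 ih2 => simp only [lucas]; omega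

lemma lucas_add_fib_s13 : ∀ n, lucas n + Nat.fib n = 2 * Nat.fib (n + 1) := by
  intro n
  induction n using Nat.twoStepInduction with
  | zero => simp [lucas]
  | one => simp [lucas]
  | more n ih1 ih2 =>
    simp only [lucas, Nat.fib_add_two] at *
    omega

lemma lucas_pair_ge : ∀ n, 3 ≤ lucas n + lucas (n + 1) := by
  intro n
  induction n with
  | zero => simp [lucas]
  | succ n ih =>
    have h1 := lucas_pos_s13 (n + 1)
    show 3 ≤ lucas (n + 1) + lucas (n + 2)
    simp only [lucas]
    omega

lemma lucas_add_two_ge (n : ℕ) : 3 ≤ lucas (n + 2) := by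
  have := lucas_pair_ge n
  simp only [lucas]
  omega

lemma lucas_ge_three (d : ℕ) (hd : 0 < d) (hde : Even d) : 3 ≤ lucas d := by
  obtain ⟨m, rfl⟩ := hde
  rw [show m + m = (m + m - 2) + 2 by omega]
  exact lucas_add_two_ge (m + m - 2)

lemma cassiniZ : ∀ n : ℕ, ((Nat.fib (n+1) : ℤ))^2 =
    (Nat.fib (n+1) : ℤ) * Nat.fib n + (Nat.fib n : ℤ)^2 + (-1)^n := by
  intro n
  induction n with
  | zero => simp
  | succ n ih =>
    have h2 : (Nat.fib (n+2) : ℤ) = (Nat.fib (n+1) : ℤ) + Nat.fib n := by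
      rw [Nat.fib_add_two]; push_cast; ring
    rw [h2, pow_succ]
    linear_combination (-1 : ℤ) * ih

lemma lucasZ (d : ℕ) : (lucas d : ℤ) = 2 * Nat.fib (d + 1) - Nat.fib d := by
  have := lucas_add_fib_s13 d
  omega

lemma fib_two_mul_Z (d : ℕ) :
    (Nat.fib (2 * d) : ℤ) = (lucas d : ℤ) * Nat.fib d := by
  have h := Nat.fib_two_mul d
  have hle : Nat.fib d ≤ 2 * Nat.fib (d + 1) := by
    have := Nat.fib_le_fib_succ (n := d)
    omega
  have h2 : (Nat.fib (2 * d) : ℤ) = (Nat.fib d : ℤ) * (2 * Nat.fib (d + 1) - Nat.fib d) := by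
    rw [h, Nat.cast_mul, Nat.cast_sub hle]; push_cast; ring
  rw [h2, lucasZ]; ring

lemma fib_two_mul_add_one_Z (d : ℕ) (hde : Even d) :
    (Nat.fib (2 * d + 1) : ℤ) + 1 = (lucas d : ℤ) * Nat.fib (d + 1) := by
  have h := Nat.fib_add d d
  have h' : (Nat.fib (2 * d + 1) : ℤ) =
      (Nat.fib d : ℤ) * Nat.fib d + (Nat.fib (d+1) : ℤ) * Nat.fib (d+1) := by
    rw [show 2 * d + 1 = d + d + 1 by ring, h]; push_cast; ring
  have hc := cassiniZ d
  rw [hde.neg_one_pow] at hc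
  rw [h', lucasZ]
  linarith

/-- Key identity: for even `d`, `F_{n+2d} + F_n = L_d · F_{n+d}`. -/
lemma fib_lucas (d : ℕ) (hde : Even d) :
    ∀ n, Nat.fib (n + 2 * d) + Nat.fib n = lucas d * Nat.fib (n + d) := by
  have key : ∀ n, (Nat.fib (n + 2 * d) : ℤ) + Nat.fib n = (lucas d : ℤ) * Nat.fib (n + d) := by
    intro n
    induction n using Nat.twoStepInduction with
    | zero => simpa using fib_two_mul_Z d
    | one =>
      rw [show 1 + 2 * d = 2 * d + 1 by ring, show 1 + d = d + 1 by ring, Nat.fib_one]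
      push_cast
      linarith [fib_two_mul_add_one_Z d hde]
    | more n ih1 ih2 =>
      have e1 : n + 2 + 2 * d = (n + 2 * d) + 2 := by ring
      have e2 : n + 2 + d = (n + d) + 2 := by ring
      rw [e1, e2, Nat.fib_add_two, Nat.fib_add_two, Nat.fib_add_two]
      push_cast
      rw [show n + 1 + 2 * d = (n + 2 * d) + 1 by ring,
        show n + 1 + d = (n + d) + 1 by ring] at ih2
      linarith
  intro n
  exact_mod_cast key n

lemma gw_mul (d i : ℕ) : gw d i * Nat.fib d = Nat.fib (i * d) :=
  Nat.div_mul_cancel (Nat.fib_dvd d (i * d) (dvd_mul_left d i))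

lemma gw_rec (d : ℕ) (hd : 0 < d) (hde : Even d) (i : ℕ) :
    gw d (i + 2) + gw d i = lucas d * gw d (i + 1) := by
  have hfd : 0 < Nat.fib d := Nat.fib_pos.mpr hd
  have h := fib_lucas d hde (i * d)
  rw [show i * d + 2 * d = (i + 2) * d by ring, show i * d + d = (i + 1) * d by ring,
    ← gw_mul d (i+2), ← gw_mul d i, ← gw_mul d (i+1)] at h
  have h2 : (gw d (i + 2) + gw d i) * Nat.fib d = (lucas d * gw d (i + 1)) * Nat.fib d := by
    rw [add_mul, mul_assoc]; exact h
  exact Nat.eq_of_mul_eq_mul_right hfd h2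

lemma gw_zero (d : ℕ) : gw d 0 = 0 := by simp [gw]

lemma gw_one (d : ℕ) (hd : 0 < d) : gw d 1 = 1 := by
  have hfd : 0 < Nat.fib d := Nat.fib_pos.mpr hd
  simp [gw, Nat.div_self hfd]

lemma gw_two (d : ℕ) (hd : 0 < d) (hde : Even d) : gw d 2 = lucas d := by
  have h := gw_rec d hd hde 0
  simp only [Nat.zero_add] at h
  rw [gw_zero, gw_one d hd, mul_one] at h
  omega

lemma gw_mono (d : ℕ) (hd : 0 < d) (hde : Even d) :
    ∀ i, 1 ≤ i → 0 < gw d i ∧ gw d i < gw d (i + 1) := by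
  have hL := lucas_ge_three d hd hde
  intro i hi
  induction i, hi using Nat.le_induction with
  | base =>
    rw [gw_one d hd, gw_two d hd hde]
    omega
  | succ n hn ih =>
    obtain ⟨h1, h2⟩ := ih
    have hrec2 := gw_rec d hd hde n
    have hmul : 3 * gw d (n + 1) ≤ lucas d * gw d (n + 1) :=
      Nat.mul_le_mul_right _ hL
    rw [show n + 1 + 1 = n + 2 from rfl]
    omega

lemma nat_div_mod (a b q c : ℕ) (h : a = b * q + c) (hc : c < b) :
    a % b = c ∧ a / b = q := by
  subst h
  rw [Nat.mul_add_mod, Nat.mod_eq_of_lt hc, Nat.mul_add_div (by omega),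
    Nat.div_eq_of_lt hc]
  omega

theorem greedy_of_fib_ratio (d k : ℕ) (hd : 0 < d) (hde : Even d) (hk : 1 < k) :
    gLam d k (Nat.fib ((k + 1) * d) / Nat.fib d) 1 = lucas d - 1 ∧
    gLam d k (Nat.fib ((k + 1) * d) / Nat.fib d) k = lucas d - 1 ∧
    ∀ i, 2 ≤ i → i ≤ k - 1 →
      gLam d k (Nat.fib ((k + 1) * d) / Nat.fib d) i = lucas d - 2 := by
  have hL := lucas_ge_three d hd hde
  have hC : Nat.fib ((k + 1) * d) / Nat.fib d = gw d (k + 1) := rfl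
  rw [hC]
  have hmono := gw_mono d hd hde
  -- top step:
  have htop : gw d (k + 1) % gw d k = gw d k - gw d (k - 1) ∧
      gw d (k + 1) / gw d k = lucas d - 1 := by
    have hrec := gw_rec d hd hde (k - 1)
    rw [show k - 1 + 2 = k + 1 by omega, show k - 1 + 1 = k by omega] at hrec
    have h1 := hmono (k - 1) (by omega)
    rw [show k - 1 + 1 = k by omega] at h1
    have hcomm : lucas d * gw d k = gw d k * lucas d := Nat.mul_comm _ _
    have hdist : gw d k * (lucas d - 1) + gw d k = gw d k * lucas d := by
      rw [← Nat.mul_succ]; congr 1; omega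
    exact nat_div_mod _ (gw d k) (lucas d - 1) (gw d k - gw d (k - 1))
      (by omega) (by omega)
  -- middle step decomposition: for 2 ≤ i,
  have hmid : ∀ i, 2 ≤ i →
      (gw d (i + 1) - gw d i) % gw d i = gw d i - gw d (i - 1) ∧
      (gw d (i + 1) - gw d i) / gw d i = lucas d - 2 := by
    intro i hi
    have hrec := gw_rec d hd hde (i - 1)
    rw [show i - 1 + 2 = i + 1 by omega, show i - 1 + 1 = i by omega] at hrec
    have h1 := hmono (i - 1) (by omega)
    rw [show i - 1 + 1 = i by omega] at h1
    have h2 := hmono i (by omega)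
    have hcomm : lucas d * gw d i = gw d i * lucas d := Nat.mul_comm _ _
    have hdist : gw d i * (lucas d - 2) + gw d i + gw d i = gw d i * lucas d := by
      rw [← Nat.mul_succ, ← Nat.mul_succ]
      congr 1
      omega
    exact nat_div_mod _ (gw d i) (lucas d - 2) (gw d i - gw d (i - 1))
      (by omega) (by omega)
  -- the remainder invariant
  have hrem : ∀ m, 1 ≤ m → m ≤ k - 1 →
      gRem d k (gw d (k + 1)) m = gw d (k - m + 1) - gw d (k - m) := by
    intro m hm
    induction m, hm using Nat.le_induction with
    | base =>
      intro _
      show gw d (k + 1) % gw d (k - 0) = _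
      rw [Nat.sub_zero, show k - 1 + 1 = k by omega]
      exact htop.1
    | succ m hm ih =>
      intro hmk
      have ihv := ih (by omega)
      show gRem d k (gw d (k + 1)) m % gw d (k - m) = _
      rw [ihv, (hmid (k - m) (by omega)).1,
        show k - (m + 1) + 1 = k - m by omega,
        show k - (m + 1) = k - m - 1 by omega]
  refine ⟨?_, ?_, ?_⟩
  · -- λ₁
    show gRem d k (gw d (k + 1)) (k - 1) / gw d 1 = lucas d - 1
    rw [hrem (k - 1) (by omega) le_rfl, show k - (k - 1) + 1 = 2 by omega,
      show k - (k - 1) = 1 by omega, gw_two d hd hde, gw_one d hd, Nat.div_one]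
  · -- λ_k
    show gRem d k (gw d (k + 1)) (k - k) / gw d k = lucas d - 1
    rw [Nat.sub_self]
    exact htop.2
  · intro i hi hik
    show gRem d k (gw d (k + 1)) (k - i) / gw d i = lucas d - 2
    rw [hrem (k - i) (by omega) (by omega), show k - (k - i) + 1 = i + 1 by omega,
      show k - (k - i) = i by omega]
    exact (hmid i hi).2
end
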